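/- Interpolation Theorem for MT₀: for all MT₀-formulas φ and ψ such that φ⊢_{MT₀}ψ, if every propositional variable of φ is among p⃗,q⃗ and every propositional variable of ψ is among q⃗,r⃗, then there exists an MT₀-formula θ whose propositional variables are among q⃗ such that φ⊢_{MT₀}θ and θ⊢_{MT₀}ψ. -/

import Mathlib

/-- Classical modal formulas: α ::= p | ⊥ | ¬α | α∧α | α⊗α | α→α | □α | ◇α,
where the negation ¬α abbreviates α→⊥. -/
inductive CForm : Type where
  | var : ℕ → CForm
  | bot : CForm
  | and : CForm → CForm → CForm
  | tensor : CForm → CForm → CForm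
  | impl : CForm → CForm → CForm
  | box : CForm → CForm
  | dia : CForm → CForm

/-- ¬α abbreviates α→⊥. -/
def CForm.neg (α : CForm) : CForm := α.impl .bot

/-- Formulas of full modal downward closed team logic MT₀:
φ ::= α | =(α₁,…,αₙ,β) | φ∧φ | φ⊗φ | φ∨φ | φ→φ | □φ | ◇φ, with α,αᵢ,β classical. -/
inductive MTForm : Type where
  | var : ℕ → MTForm
  | bot : MTForm
  | dep : List CForm → CForm → MTForm
  | and : MTForm → MTForm → MTForm
  | tensor : MTForm → MTForm → MTForm
  | or : MTForm → MTForm → MTForm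
  | impl : MTForm → MTForm → MTForm
  | box : MTForm → MTForm
  | dia : MTForm → MTForm

/-- The structural embedding of classical modal formulas into MT₀ formulas. -/
def CForm.toMT : CForm → MTForm
  | .var p => .var p
  | .bot => .bot
  | .and α β => .and α.toMT β.toMT
  | .tensor α β => .tensor α.toMT β.toMT
  | .impl α β => .impl α.toMT β.toMT
  | .box α => .box α.toMT
  | .dia α => .dia α.toMT

/-- ¬φ abbreviates φ→⊥. -/
def mneg (φ : MTForm) : MTForm := φ.impl .bot

/-- φ↔ψ abbreviates (φ→ψ)∧(ψ→φ). -/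
def MTForm.iff (φ ψ : MTForm) : MTForm := (φ.impl ψ).and (ψ.impl φ)

/-- The law of excluded middle formula α∨¬α for a classical formula α. -/
def exclMid (α : CForm) : MTForm := (α.toMT).or (mneg α.toMT)

/-- Conjunction of a list of formulas; the empty conjunction is ⊥→⊥ (truth). -/
def bigAnd : List MTForm → MTForm
  | [] => MTForm.impl .bot .bot
  | [φ] => φ
  | φ :: ψ :: χs => .and φ (bigAnd (ψ :: χs))

/-- Axiom schemes of the Hilbert system of MT₀. -/
inductive MTAx : MTForm → Prop where
  -- axiom schemes of intuitionistic propositional logic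
  | ipc1 (φ ψ : MTForm) : MTAx (φ.impl (ψ.impl φ))
  | ipc2 (φ ψ χ : MTForm) :
      MTAx ((φ.impl (ψ.impl χ)).impl ((φ.impl ψ).impl (φ.impl χ)))
  | ipc3a (φ ψ : MTForm) : MTAx ((φ.and ψ).impl φ)
  | ipc3b (φ ψ : MTForm) : MTAx ((φ.and ψ).impl ψ)
  | ipc4 (φ χ : MTForm) : MTAx (φ.impl (χ.impl (φ.and χ)))
  | ipc5a (φ ψ : MTForm) : MTAx (φ.impl (φ.or ψ))
  | ipc5b (φ ψ : MTForm) : MTAx (ψ.impl (φ.or ψ))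
  | ipc6 (φ ψ χ : MTForm) :
      MTAx ((φ.impl χ).impl ((ψ.impl χ).impl ((φ.or ψ).impl χ)))
  | ipc7 (φ : MTForm) : MTAx (MTForm.bot.impl φ)
  -- the split axiom, for classical α
  | split (α : CForm) (φ ψ : MTForm) :
      MTAx ((α.toMT.impl (φ.or ψ)).impl ((α.toMT.impl φ).or (α.toMT.impl ψ)))
  -- double negation law for classical α
  | dne (α : CForm) : MTAx ((mneg (mneg α.toMT)).impl α.toMT)
  -- modal axiom schemes (Fischer Servi's IK)
  | kbox (φ ψ : MTForm) :
      MTAx ((MTForm.box (φ.impl ψ)).impl ((MTForm.box φ).impl (MTForm.box ψ)))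
  | kdia (φ ψ : MTForm) :
      MTAx ((MTForm.box (φ.impl ψ)).impl ((MTForm.dia φ).impl (MTForm.dia ψ)))
  | negDiaBot : MTAx (mneg (MTForm.dia .bot))
  | diaOr (φ ψ : MTForm) :
      MTAx ((MTForm.dia (φ.or ψ)).impl ((MTForm.dia φ).or (MTForm.dia ψ)))
  | fs (φ ψ : MTForm) :
      MTAx (((MTForm.dia φ).impl (MTForm.box ψ)).impl (MTForm.box (φ.impl ψ)))
  -- dependence atom axiom
  | depAx (αs : List CForm) (β : CForm) :
      MTAx ((MTForm.dep αs β).iff ((bigAnd (αs.map exclMid)).impl (exclMid β)))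
  -- tensor axioms
  | tensor1 (φ ψ : MTForm) : MTAx (φ.impl (φ.tensor ψ))
  | tensor2 (φ ψ : MTForm) (α : CForm) :
      MTAx ((φ.impl α.toMT).impl ((ψ.impl α.toMT).impl ((φ.tensor ψ).impl α.toMT)))
  | tensor3 (φ ψ χ θ : MTForm) :
      MTAx ((φ.impl χ).impl ((ψ.impl θ).impl ((φ.tensor ψ).impl (χ.tensor θ))))
  | tensorComm (φ ψ : MTForm) : MTAx ((φ.tensor ψ).impl (ψ.tensor φ))
  | tensorAssoc (φ ψ χ : MTForm) :
      MTAx ((φ.tensor (ψ.tensor χ)).impl ((φ.tensor ψ).tensor χ))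
  | tensorOr (φ ψ χ : MTForm) :
      MTAx ((φ.tensor (ψ.or χ)).impl ((φ.tensor ψ).or (φ.tensor χ)))
  -- interaction of box and diamond on classical formulas
  | boxDiaNeg (α : CForm) :
      MTAx ((mneg (MTForm.box α.toMT)).impl (MTForm.dia (mneg α.toMT)))
  -- box distributes over intuitionistic disjunction
  | boxOr (φ ψ : MTForm) :
      MTAx ((MTForm.box (φ.or ψ)).impl ((MTForm.box φ).or (MTForm.box ψ)))

/-- Theorems of the Hilbert system of MT₀ (derivations from no assumptions,
using modus ponens and necessitation). -/
inductive MTThm : MTForm → Prop where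
  | ax {φ : MTForm} : MTAx φ → MTThm φ
  | mp {φ ψ : MTForm} : MTThm (φ.impl ψ) → MTThm φ → MTThm ψ
  | nec {φ : MTForm} : MTThm φ → MTThm φ.box

/-- φ⊢ψ : derivations of ψ from the assumption φ, in which necessitation is
applied only to theorems. -/
inductive MTDer (γ : MTForm) : MTForm → Prop where
  | hyp : MTDer γ γ
  | thm {φ : MTForm} : MTThm φ → MTDer γ φ
  | mp {φ ψ : MTForm} : MTDer γ (φ.impl ψ) → MTDer γ φ → MTDer γ ψ

/-- The set of propositional variables occurring in a classical modal formula. -/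
def CForm.pvars : CForm → Set ℕ
  | .var p => {p}
  | .bot => ∅
  | .and α β => α.pvars ∪ β.pvars
  | .tensor α β => α.pvars ∪ β.pvars
  | .impl α β => α.pvars ∪ β.pvars
  | .box α => α.pvars
  | .dia α => α.pvars

/-- The set of propositional variables occurring in an MT₀ formula. -/
def MTForm.pvars : MTForm → Set ℕ
  | .var p => {p}
  | .bot => ∅
  | .dep αs β => {p | ∃ α ∈ αs, p ∈ α.pvars} ∪ β.pvars
  | .and φ ψ => φ.pvars ∪ ψ.pvars
  | .tensor φ ψ => φ.pvars ∪ ψ.pvars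
  | .or φ ψ => φ.pvars ∪ ψ.pvars
  | .impl φ ψ => φ.pvars ∪ ψ.pvars
  | .box φ => φ.pvars
  | .dia φ => φ.pvars

/-! ### Section 1: derivations from a context, deduction theorem, ND toolkit -/

namespace MTP
open MTForm

inductive Der : List MTForm → MTForm → Prop where
  | hyp {Γ : List MTForm} {φ : MTForm} : φ ∈ Γ → Der Γ φ
  | thm {Γ : List MTForm} {φ : MTForm} : MTThm φ → Der Γ φ
  | mp {Γ : List MTForm} {φ ψ : MTForm} :
      Der Γ (φ.impl ψ) → Der Γ φ → Der Γ ψ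

theorem Der.axm {Γ : List MTForm} {φ : MTForm} (h : MTAx φ) : Der Γ φ :=
  .thm (.ax h)

theorem Der.weak {Γ Δ : List MTForm} {φ : MTForm} (h : Der Γ φ)
    (s : ∀ x ∈ Γ, x ∈ Δ) : Der Δ φ := by
  induction h with
  | hyp h => exact .hyp (s _ h)
  | thm h => exact .thm h
  | mp _ _ ih1 ih2 => exact .mp ih1 ih2

theorem Der.head {Γ : List MTForm} {φ : MTForm} : Der (φ :: Γ) φ :=
  .hyp (List.mem_cons_self)

theorem Der.tail {Γ : List MTForm} {φ ψ : MTForm} (h : Der Γ φ) :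
    Der (ψ :: Γ) φ := h.weak (fun _ hx => List.mem_cons_of_mem _ hx)

/-- identity -/
theorem Der.id {Γ : List MTForm} (φ : MTForm) : Der Γ (φ.impl φ) := by
  have h1 : Der Γ (φ.impl ((φ.impl φ).impl φ)) := .axm (.ipc1 _ _)
  have h2 : Der Γ ((φ.impl ((φ.impl φ).impl φ)).impl
      ((φ.impl (φ.impl φ)).impl (φ.impl φ))) := .axm (.ipc2 _ _ _)
  exact .mp (.mp h2 h1) (.axm (.ipc1 _ _))

/-- deduction theorem -/
theorem ded {Γ : List MTForm} {γ φ : MTForm} (h : Der (γ :: Γ) φ) :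
    Der Γ (γ.impl φ) := by
  induction h with
  | hyp h =>
    rcases List.mem_cons.1 h with h' | h'
    · subst h'; exact Der.id _
    · exact .mp (.axm (.ipc1 _ _)) (.hyp h')
  | thm h => exact .mp (.axm (.ipc1 _ _)) (.thm h)
  | mp _ _ ih1 ih2 => exact .mp (.mp (.axm (.ipc2 _ _ _)) ih1) ih2

theorem unded {Γ : List MTForm} {γ φ : MTForm} (h : Der Γ (γ.impl φ)) :
    Der (γ :: Γ) φ :=
  .mp (h.tail) Der.head

theorem der_nil {φ : MTForm} (h : Der [] φ) : MTThm φ := by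
  induction h with
  | hyp h => simp at h
  | thm h => exact h
  | mp _ _ ih1 ih2 => exact ih1.mp ih2

theorem Der.ofMTDer {γ φ : MTForm} (h : MTDer γ φ) : Der [γ] φ := by
  induction h with
  | hyp => exact .head
  | thm h => exact .thm h
  | mp _ _ ih1 ih2 => exact .mp ih1 ih2

theorem Der.toMTDer {γ φ : MTForm} (h : Der [γ] φ) : MTDer γ φ := by
  induction h with
  | hyp h => simp at h; subst h; exact .hyp
  | thm h => exact .thm h
  | mp _ _ ih1 ih2 => exact .mp ih1 ih2

/-- ND toolkit -/
theorem Der.efq {Γ : List MTForm} {φ : MTForm} (h : Der Γ .bot) : Der Γ φ :=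
  .mp (.axm (.ipc7 _)) h

theorem Der.andI {Γ : List MTForm} {φ ψ : MTForm} (h1 : Der Γ φ)
    (h2 : Der Γ ψ) : Der Γ (φ.and ψ) :=
  .mp (.mp (.axm (.ipc4 _ _)) h1) h2

theorem Der.andE1 {Γ : List MTForm} {φ ψ : MTForm} (h : Der Γ (φ.and ψ)) :
    Der Γ φ := .mp (.axm (.ipc3a _ _)) h

theorem Der.andE2 {Γ : List MTForm} {φ ψ : MTForm} (h : Der Γ (φ.and ψ)) :
    Der Γ ψ := .mp (.axm (.ipc3b _ _)) h

theorem Der.orI1 {Γ : List MTForm} {φ : MTForm} (ψ : MTForm) (h : Der Γ φ) :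
    Der Γ (φ.or ψ) := .mp (.axm (.ipc5a _ _)) h

theorem Der.orI2 {Γ : List MTForm} {ψ : MTForm} (φ : MTForm) (h : Der Γ ψ) :
    Der Γ (φ.or ψ) := .mp (.axm (.ipc5b _ _)) h

theorem Der.orE {Γ : List MTForm} {φ ψ χ : MTForm} (h : Der Γ (φ.or ψ))
    (h1 : Der (φ :: Γ) χ) (h2 : Der (ψ :: Γ) χ) : Der Γ χ :=
  .mp (.mp (.mp (.axm (.ipc6 _ _ _)) (ded h1)) (ded h2)) h

/-- composition of implications, at theorem level -/
theorem _root_.MTThm.comp {φ ψ χ : MTForm} (h1 : MTThm (φ.impl ψ))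
    (h2 : MTThm (ψ.impl χ)) : MTThm (φ.impl χ) := by
  apply der_nil; apply ded
  exact .mp (.thm h2) (.mp (.thm h1) .head)

theorem thm_der {Γ : List MTForm} {φ ψ : MTForm} (h : MTThm (φ.impl ψ))
    (hd : Der Γ φ) : Der Γ ψ := .mp (.thm h) hd

end MTP
/-! ### Section 2: classical kit on classical formulas, modal kit -/

namespace MTP
open MTForm

theorem neg_toMT (α : CForm) : α.neg.toMT = mneg α.toMT := rfl

/-- excluded middle in tensor form, for classical formulas -/
theorem lemTensor (α : CForm) : MTThm (α.toMT.tensor (mneg α.toMT)) := by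
  have hT : (α.tensor α.neg).toMT = α.toMT.tensor (mneg α.toMT) := rfl
  rw [← hT]
  apply (MTThm.ax (.dne (α.tensor α.neg))).mp
  apply der_nil
  apply ded
  -- context: ¬(α ⊗ ¬α)
  have hna : Der [mneg (α.tensor α.neg).toMT] (mneg α.toMT) := by
    apply ded
    exact .mp (Der.head.tail) (.mp (.axm (.tensor1 _ _)) .head)
  refine .mp Der.head ?_
  refine .mp (.axm (.tensorComm (mneg α.toMT) α.toMT)) ?_
  exact .mp (.axm (.tensor1 _ _)) hna

/-- tensor elimination into a classical target -/
theorem Der.tensorE {Γ : List MTForm} {φ ψ : MTForm} {δ : CForm}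
    (h : Der Γ (φ.tensor ψ)) (h1 : Der (φ :: Γ) δ.toMT)
    (h2 : Der (ψ :: Γ) δ.toMT) : Der Γ δ.toMT :=
  .mp (.mp (.mp (.axm (.tensor2 _ _ δ)) (ded h1)) (ded h2)) h

/-- case analysis on a classical formula, for a classical goal -/
theorem Der.ccases {Γ : List MTForm} {δ : CForm} (γ : CForm)
    (h1 : Der (γ.toMT :: Γ) δ.toMT) (h2 : Der (mneg γ.toMT :: Γ) δ.toMT) :
    Der Γ δ.toMT :=
  Der.tensorE (.thm (lemTensor γ)) h1 h2

/-- reductio ad absurdum for a classical goal -/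
theorem Der.raa {Γ : List MTForm} {γ : CForm}
    (h : Der (mneg γ.toMT :: Γ) .bot) : Der Γ γ.toMT :=
  Der.ccases γ .head (h.efq)

theorem _root_.MTThm.mpcomp {φ ψ χ : MTForm} (h1 : MTThm (φ.impl (ψ.impl χ)))
    (h2 : MTThm (φ.impl ψ)) : MTThm (φ.impl χ) := by
  apply der_nil; apply ded
  exact .mp (.mp (.thm h1) .head) (.mp (.thm h2) .head)

/-- modal kit -/
theorem boxMono {φ ψ : MTForm} (h : MTThm (φ.impl ψ)) :
    MTThm ((box φ).impl (box ψ)) := (MTThm.ax (.kbox _ _)).mp h.nec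

theorem diaMono {φ ψ : MTForm} (h : MTThm (φ.impl ψ)) :
    MTThm ((dia φ).impl (dia ψ)) := (MTThm.ax (.kdia _ _)).mp h.nec

theorem boxAnd {φ ψ : MTForm} :
    MTThm ((box φ).impl ((box ψ).impl (box (φ.and ψ)))) := by
  have h1 : MTThm ((box φ).impl (box (ψ.impl (φ.and ψ)))) :=
    boxMono (MTThm.ax (.ipc4 _ _))
  apply der_nil; apply ded; apply ded
  refine .mp (.mp (.axm (.kbox _ _)) ?_) .head
  exact .mp (.thm h1) (Der.head.tail)

theorem dneCThm (γ : CForm) : MTThm ((γ.neg.neg).toMT.impl γ.toMT) :=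
  MTThm.ax (.dne γ)

/-- ¬◇γ → □¬γ for classical γ -/
theorem negDia_boxNeg (γ : CForm) :
    MTThm ((mneg (dia γ.toMT)).impl (box (mneg γ.toMT))) := by
  apply der_nil; apply ded
  have hbn : box (mneg γ.toMT) = (γ.neg.box).toMT := rfl
  rw [hbn]
  apply Der.raa
  -- context: ¬□¬γ, ¬◇γ
  have h1 : Der [mneg (γ.neg.box).toMT, mneg (dia γ.toMT)] (dia (mneg γ.neg.toMT)) :=
    .mp (.axm (.boxDiaNeg γ.neg)) .head
  have h2 : MTThm ((dia (mneg γ.neg.toMT)).impl (dia γ.toMT)) := by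
    apply diaMono
    exact MTThm.ax (.dne γ)
  exact .mp (Der.head.tail) (.mp (.thm h2) h1)

/-- ◇γ → (□¬γ → ⊥) for classical γ -/
theorem diaBoxNegBot (γ : CForm) :
    MTThm ((dia γ.toMT).impl ((box (mneg γ.toMT)).impl .bot)) := by
  apply der_nil; apply ded; apply ded
  -- □(γ→⊥) → (◇γ → ◇⊥)
  have h1 : Der [box (mneg γ.toMT), dia γ.toMT] (dia .bot) :=
    .mp (.mp (.axm (.kdia γ.toMT .bot)) .head) (Der.head.tail)
  exact .mp (.thm (MTThm.ax .negDiaBot)) h1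

end MTP
/-! ### Section 3: folds -/

namespace MTP
open MTForm

/-- big intuitionistic disjunction -/
def bigOr : List MTForm → MTForm
  | [] => .bot
  | φ :: L => φ.or (bigOr L)

/-- big tensor of classical formulas -/
def cT : List CForm → CForm
  | [] => .bot
  | γ :: L => γ.tensor (cT L)

/-- big conjunction of classical formulas -/
def cA : List CForm → CForm
  | [] => CForm.bot.impl .bot
  | γ :: L => γ.and (cA L)

theorem orElimT {φ ψ χ : MTForm} (h1 : MTThm (φ.impl χ))
    (h2 : MTThm (ψ.impl χ)) : MTThm ((φ.or ψ).impl χ) :=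
  ((MTThm.ax (.ipc6 _ _ _)).mp h1).mp h2

theorem orMono {φ ψ φ' ψ' : MTForm} (h1 : MTThm (φ.impl φ'))
    (h2 : MTThm (ψ.impl ψ')) : MTThm ((φ.or ψ).impl (φ'.or ψ')) :=
  orElimT (h1.comp (MTThm.ax (.ipc5a _ _))) (h2.comp (MTThm.ax (.ipc5b _ _)))

theorem bigOr_intro {φ : MTForm} {L : List MTForm} (h : φ ∈ L) :
    MTThm (φ.impl (bigOr L)) := by
  induction L with
  | nil => simp at h
  | cons ψ L ih =>
    rcases List.mem_cons.1 h with h' | h'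
    · subst h'; exact MTThm.ax (.ipc5a _ _)
    · exact (ih h').comp (MTThm.ax (.ipc5b _ _))

theorem bigOr_elim {ψ : MTForm} {L : List MTForm}
    (h : ∀ φ ∈ L, MTThm (φ.impl ψ)) : MTThm ((bigOr L).impl ψ) := by
  induction L with
  | nil => exact MTThm.ax (.ipc7 _)
  | cons φ L ih =>
    exact orElimT (h φ (by simp)) (ih (fun χ hχ => h χ (by simp [hχ])))

theorem bigOr_mono {L L' : List MTForm} (h : ∀ φ ∈ L, φ ∈ L') :
    MTThm ((bigOr L).impl (bigOr L')) :=
  bigOr_elim (fun φ hφ => bigOr_intro (h φ hφ))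

theorem bigOr_mono2 {L L' : List MTForm}
    (h : ∀ φ ∈ L, ∃ ψ ∈ L', MTThm (φ.impl ψ)) :
    MTThm ((bigOr L).impl (bigOr L')) := by
  refine bigOr_elim (fun φ hφ => ?_)
  obtain ⟨ψ, hψ, hi⟩ := h φ hφ
  exact hi.comp (bigOr_intro hψ)

theorem tensorI1 {φ ψ : MTForm} : MTThm (φ.impl (φ.tensor ψ)) :=
  MTThm.ax (.tensor1 _ _)

theorem tensorI2 {φ ψ : MTForm} : MTThm (ψ.impl (φ.tensor ψ)) :=
  (MTThm.ax (.tensor1 _ _)).comp (MTThm.ax (.tensorComm _ _))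

theorem tensorMono {φ ψ φ' ψ' : MTForm} (h1 : MTThm (φ.impl φ'))
    (h2 : MTThm (ψ.impl ψ')) : MTThm ((φ.tensor ψ).impl (φ'.tensor ψ')) :=
  ((MTThm.ax (.tensor3 _ _ _ _)).mp h1).mp h2

theorem cT_intro {γ : CForm} {L : List CForm} (h : γ ∈ L) :
    MTThm (γ.toMT.impl (cT L).toMT) := by
  induction L with
  | nil => simp at h
  | cons δ L ih =>
    rcases List.mem_cons.1 h with h' | h'
    · subst h'; exact tensorI1
    · exact (ih h').comp tensorI2

theorem cT_elim {δ : CForm} {L : List CForm}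
    (h : ∀ γ ∈ L, MTThm (γ.toMT.impl δ.toMT)) :
    MTThm ((cT L).toMT.impl δ.toMT) := by
  induction L with
  | nil => exact MTThm.ax (.ipc7 _)
  | cons γ L ih =>
    exact ((MTThm.ax (.tensor2 _ _ δ)).mp (h γ (by simp))).mp
      (ih (fun χ hχ => h χ (by simp [hχ])))

theorem cT_mono {L L' : List CForm} (h : ∀ γ ∈ L, γ ∈ L') :
    MTThm ((cT L).toMT.impl (cT L').toMT) :=
  cT_elim (fun γ hγ => cT_intro (h γ hγ))

theorem cT_mono2 {L L' : List CForm}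
    (h : ∀ γ ∈ L, ∃ δ ∈ L', MTThm (γ.toMT.impl δ.toMT)) :
    MTThm ((cT L).toMT.impl (cT L').toMT) := by
  refine cT_elim (fun γ hγ => ?_)
  obtain ⟨δ, hδ, hi⟩ := h γ hγ
  exact hi.comp (cT_intro hδ)

theorem topI {Γ : List MTForm} : Der Γ (cA []).toMT := Der.id _

theorem cA_elim {γ : CForm} {L : List CForm} (h : γ ∈ L) :
    MTThm ((cA L).toMT.impl γ.toMT) := by
  induction L with
  | nil => simp at h
  | cons δ L ih =>
    rcases List.mem_cons.1 h with h' | h'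
    · subst h'; exact MTThm.ax (.ipc3a _ _)
    · exact (MTThm.ax (.ipc3b _ _)).comp (ih h')

theorem cA_intro {δ : CForm} {L : List CForm}
    (h : ∀ γ ∈ L, MTThm (δ.toMT.impl γ.toMT)) :
    MTThm (δ.toMT.impl (cA L).toMT) := by
  induction L with
  | nil =>
    apply der_nil; apply ded; exact Der.id _
  | cons γ L ih =>
    apply der_nil; apply ded
    exact Der.andI (.mp (.thm (h γ (by simp))) .head)
      (.mp (.thm (ih (fun χ hχ => h χ (by simp [hχ])))) .head)

/-- flatMap lemma for tensor folds -/
theorem cT_flatMap {L : List CForm} {f : CForm → List CForm}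
    (h : ∀ γ ∈ L, MTThm (γ.toMT.impl (cT (f γ)).toMT)) :
    MTThm ((cT L).toMT.impl (cT (L.flatMap f)).toMT) := by
  refine cT_elim (fun γ hγ => (h γ hγ).comp (cT_mono ?_))
  intro δ hδ
  exact List.mem_flatMap.2 ⟨γ, hγ, hδ⟩

end MTP
/-! ### Section 4a: helpers towards disjunctive normal form -/

namespace MTP
open MTForm

/-- disjunction of a list of classical formulas -/
def dOr (L : List CForm) : MTForm := bigOr (L.map CForm.toMT)

theorem dOr_intro {γ : CForm} {L : List CForm} (h : γ ∈ L) :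
    MTThm (γ.toMT.impl (dOr L)) :=
  bigOr_intro (List.mem_map_of_mem h)

theorem dOr_elim {ψ : MTForm} {L : List CForm}
    (h : ∀ γ ∈ L, MTThm (γ.toMT.impl ψ)) : MTThm ((dOr L).impl ψ) := by
  refine bigOr_elim (fun φ hφ => ?_)
  obtain ⟨γ, hγ, rfl⟩ := List.mem_map.1 hφ
  exact h γ hγ

theorem dOr_mono {L L' : List CForm} (h : ∀ γ ∈ L, γ ∈ L') :
    MTThm ((dOr L).impl (dOr L')) :=
  dOr_elim (fun γ hγ => dOr_intro (h γ hγ))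

theorem dOr_mono2 {L L' : List CForm}
    (h : ∀ γ ∈ L, ∃ δ ∈ L', MTThm (γ.toMT.impl δ.toMT)) :
    MTThm ((dOr L).impl (dOr L')) := by
  refine dOr_elim (fun γ hγ => ?_)
  obtain ⟨δ, hδ, hi⟩ := h γ hγ
  exact hi.comp (dOr_intro hδ)

theorem dOr_cons (γ : CForm) (L : List CForm) :
    dOr (γ :: L) = γ.toMT.or (dOr L) := rfl

theorem implMono {φ ψ φ' ψ' : MTForm} (h1 : MTThm (φ'.impl φ))
    (h2 : MTThm (ψ.impl ψ')) : MTThm ((φ.impl ψ).impl (φ'.impl ψ')) := by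
  apply der_nil; apply ded; apply ded
  refine .mp (.thm h2) (.mp (Der.head.tail) (.mp (.thm h1) .head))

theorem swapImp {φ ψ χ : MTForm} (h : MTThm (φ.impl (ψ.impl χ))) :
    MTThm (ψ.impl (φ.impl χ)) := by
  apply der_nil; apply ded; apply ded
  exact .mp (.mp (.thm h) .head) (Der.head.tail)

/-- generic binary product -/
def prodWith (f : CForm → CForm → CForm) (A B : List CForm) : List CForm :=
  A.flatMap fun a => B.map fun b => f a b

theorem mem_prodWith {f : CForm → CForm → CForm} {A B : List CForm} {γ : CForm} :
    γ ∈ prodWith f A B ↔ ∃ a ∈ A, ∃ b ∈ B, γ = f a b := by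
  simp [prodWith, eq_comm]

/-- γ ∧ ⋁B → ⋁ (map (f γ) B), given γ∧b → f γ b -/
theorem and_mapf {γ : CForm} {B : List CForm} {f : CForm → CForm → CForm}
    (hf : ∀ b ∈ B, MTThm ((γ.toMT.and b.toMT).impl (f γ b).toMT)) :
    MTThm ((γ.toMT.and (dOr B)).impl (dOr (B.map (f γ)))) := by
  induction B with
  | nil =>
    apply der_nil; apply ded; exact (Der.head.andE2).efq
  | cons b B ih =>
    apply der_nil; apply ded
    rw [dOr_cons] at *
    refine Der.orE (Der.head.andE2) ?_ ?_
    · refine Der.orI1 _ ?_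
      refine .mp (.thm (hf b (by simp))) ?_
      exact Der.andI (Der.head.tail.andE1) Der.head
    · refine Der.orI2 _ ?_
      refine .mp (.thm (ih (fun b hb => hf b (by simp [hb])))) ?_
      exact Der.andI (Der.head.tail.andE1) Der.head

/-- ⋁A ∧ ⋁B → ⋁ pairwise products -/
theorem orProd {A B : List CForm} {f : CForm → CForm → CForm}
    (hf : ∀ a ∈ A, ∀ b ∈ B, MTThm ((a.toMT.and b.toMT).impl (f a b).toMT)) :
    MTThm (((dOr A).and (dOr B)).impl (dOr (prodWith f A B))) := by
  induction A with
  | nil =>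
    apply der_nil; apply ded; exact (Der.head.andE1).efq
  | cons a A ih =>
    apply der_nil; apply ded
    rw [dOr_cons] at *
    refine Der.orE (Der.head.andE1) ?_ ?_
    · have h1 : MTThm ((a.toMT.and (dOr B)).impl (dOr (B.map (f a)))) :=
        and_mapf (fun b hb => hf a (by simp) b hb)
      have h2 : MTThm ((dOr (B.map (f a))).impl (dOr (prodWith f (a :: A) B))) := by
        refine dOr_mono (fun γ hγ => ?_)
        obtain ⟨b, hb, rfl⟩ := List.mem_map.1 hγ
        exact mem_prodWith.2 ⟨a, by simp, b, hb, rfl⟩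
      refine .mp (.thm (h1.comp h2)) ?_
      exact Der.andI Der.head (Der.head.tail.andE2)
    · have h2 : MTThm ((dOr (prodWith f A B)).impl (dOr (prodWith f (a :: A) B))) := by
        refine dOr_mono (fun γ hγ => ?_)
        obtain ⟨a', ha, b, hb, rfl⟩ := mem_prodWith.1 hγ
        exact mem_prodWith.2 ⟨a', by simp [ha], b, hb, rfl⟩
      refine .mp (.thm ((ih (fun x hx => hf x (by simp [hx]))).comp h2)) ?_
      exact Der.andI Der.head (Der.head.tail.andE2)

/-- (α → ⋁(b::B)) → ⋁ (α→b') over b'∈b::B ; uses the split axiom -/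
theorem splitOr (a : CForm) (b : CForm) (B : List CForm) :
    MTThm ((a.toMT.impl (dOr (b :: B))).impl
      (dOr ((b :: B).map fun b' => a.impl b'))) := by
  induction B generalizing b with
  | nil =>
    have hs : MTThm ((a.toMT.impl (b.toMT.or (dOr []))).impl
        ((a.toMT.impl b.toMT).or (a.toMT.impl (dOr [])))) := MTThm.ax (.split a _ _)
    refine hs.comp (orElimT ?_ ?_)
    · exact dOr_intro (γ := a.impl b) (by simp)
    · apply der_nil; apply ded
      refine thm_der (dOr_intro (γ := a.impl b) (by simp)) ?_
      apply ded
      exact Der.efq (.mp (Der.head.tail) .head)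
  | cons b' B ih =>
    have hs : MTThm ((a.toMT.impl (b.toMT.or (dOr (b' :: B)))).impl
        ((a.toMT.impl b.toMT).or (a.toMT.impl (dOr (b' :: B))))) := MTThm.ax (.split a _ _)
    refine hs.comp (orElimT ?_ ?_)
    · exact (dOr_intro (γ := a.impl b) (L := (b :: b' :: B).map fun x => a.impl x) (by simp))
    · refine (ih b').comp (dOr_mono ?_)
      intro γ hγ; simp at hγ ⊢; tauto

/-- left distribution of tensor over or -/
theorem tensorOrL {φ ψ χ : MTForm} :
    MTThm (((φ.or ψ).tensor χ).impl ((φ.tensor χ).or (ψ.tensor χ))) :=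
  ((MTThm.ax (.tensorComm _ _)).comp (MTThm.ax (.tensorOr _ _ _))).comp
    (orMono (MTThm.ax (.tensorComm _ _)) (MTThm.ax (.tensorComm _ _)))

/-- γ ⊗ ⋁(b::B) → ⋁ (γ⊗b') -/
theorem tensor_map (γ : CForm) (b : CForm) (B : List CForm) :
    MTThm ((γ.toMT.tensor (dOr (b :: B))).impl
      (dOr ((b :: B).map fun b' => γ.tensor b'))) := by
  induction B generalizing b with
  | nil =>
    rw [dOr_cons]
    refine (MTThm.ax (.tensorOr _ _ _)).comp (orElimT ?_ ?_)
    · exact dOr_intro (γ := γ.tensor b) (by simp)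
    · refine MTThm.comp ?_ (dOr_intro (γ := γ.tensor b) (by simp))
      exact tensorMono (der_nil (Der.id _)) (MTThm.ax (.ipc7 _))
  | cons b' B ih =>
    rw [dOr_cons]
    refine (MTThm.ax (.tensorOr _ _ _)).comp (orElimT ?_ ?_)
    · exact dOr_intro (γ := γ.tensor b) (L := (b :: b' :: B).map fun x => γ.tensor x) (by simp)
    · refine (ih b').comp (dOr_mono ?_)
      intro δ hδ; simp at hδ ⊢; tauto

end MTP
/-! ### Section 4b: NF combinators for impl, box, dia, dep -/

namespace MTP
open MTForm

theorem _root_.MTThm.andE1 {φ ψ : MTForm} (h : MTThm (φ.and ψ)) : MTThm φ :=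
  (MTThm.ax (.ipc3a _ _)).mp h

theorem _root_.MTThm.andE2 {φ ψ : MTForm} (h : MTThm (φ.and ψ)) : MTThm ψ :=
  (MTThm.ax (.ipc3b _ _)).mp h

theorem cA_introMT {φ : MTForm} {L : List CForm}
    (h : ∀ γ ∈ L, MTThm (φ.impl γ.toMT)) :
    MTThm (φ.impl (cA L).toMT) := by
  induction L with
  | nil =>
    apply der_nil; apply ded
    show Der _ (MTForm.impl .bot .bot)
    exact Der.id _
  | cons γ L ih =>
    apply der_nil; apply ded
    exact Der.andI (.mp (.thm (h γ (by simp))) .head)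
      (.mp (.thm (ih (fun χ hχ => h χ (by simp [hχ])))) .head)

theorem andMono {φ ψ φ' ψ' : MTForm} (h1 : MTThm (φ.impl φ'))
    (h2 : MTThm (ψ.impl ψ')) : MTThm ((φ.and ψ).impl (φ'.and ψ')) := by
  apply der_nil; apply ded
  exact Der.andI (.mp (.thm h1) Der.head.andE1) (.mp (.thm h2) Der.head.andE2)

/-- the canonical truth -/
def cTop : CForm := CForm.bot.impl .bot

def implNFne (A B : List CForm) : List CForm :=
  match A with
  | [] => [cTop]
  | a :: A' => prodWith (fun x g => x.and g) (B.map fun b => a.impl b) (implNFne A' B)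

theorem implNFne_ne {A B : List CForm} (hB : B ≠ []) : implNFne A B ≠ [] := by
  induction A with
  | nil => simp [implNFne]
  | cons a A ih =>
    obtain ⟨b, hb⟩ := List.exists_mem_of_ne_nil B hB
    obtain ⟨γ, hγ⟩ := List.exists_mem_of_ne_nil _ ih
    refine List.ne_nil_of_mem (a := (a.impl b).and γ) ?_
    exact mem_prodWith.2 ⟨a.impl b, List.mem_map_of_mem hb, γ, hγ, rfl⟩

theorem implNFne_fwd (A : List CForm) (b : CForm) (B' : List CForm) :
    MTThm (((dOr A).impl (dOr (b :: B'))).impl (dOr (implNFne A (b :: B')))) := by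
  induction A with
  | nil =>
    apply der_nil; apply ded
    exact Der.orI1 _ (Der.id _)
  | cons a A ih =>
    have h1 : MTThm (((dOr (a :: A)).impl (dOr (b :: B'))).impl
        (a.toMT.impl (dOr (b :: B')))) := by
      apply der_nil; apply ded; apply ded
      exact .mp (Der.head.tail) (Der.orI1 _ Der.head)
    have h2 : MTThm (((dOr (a :: A)).impl (dOr (b :: B'))).impl
        ((dOr A).impl (dOr (b :: B')))) := by
      apply der_nil; apply ded; apply ded
      exact .mp (Der.head.tail) (Der.orI2 _ Der.head)
    have hprod : MTThm (((dOr ((b :: B').map fun x => a.impl x)).and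
        (dOr (implNFne A (b :: B')))).impl (dOr (implNFne (a :: A) (b :: B')))) := by
      refine orProd (fun x _ g _ => ?_)
      exact der_nil (Der.id _)
    apply der_nil; apply ded
    refine .mp (.thm hprod) (Der.andI ?_ ?_)
    · exact .mp (.thm (splitOr a b B')) (.mp (.thm h1) Der.head)
    · exact .mp (.thm ih) (.mp (.thm h2) Der.head)

theorem implNFne_bwd (A : List CForm) (B : List CForm) :
    ∀ γ ∈ implNFne A B, MTThm (γ.toMT.impl ((dOr A).impl (dOr B))) := by
  induction A with
  | nil =>
    intro γ hγ
    simp [implNFne] at hγ; subst hγ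
    apply der_nil; apply ded; apply ded
    exact Der.head.efq
  | cons a A ih =>
    intro γ hγ
    obtain ⟨x, hx, g, hg, rfl⟩ := mem_prodWith.1 hγ
    obtain ⟨bb, hbb, rfl⟩ := List.mem_map.1 hx
    apply der_nil; apply ded; apply ded
    rw [dOr_cons]
    refine Der.orE Der.head ?_ ?_
    · have hab : Der [a.toMT, dOr (a :: A), ((a.impl bb).and g).toMT] bb.toMT := by
        refine .mp ?_ Der.head
        exact (Der.head.tail.tail).andE1
      exact .mp (.thm (dOr_intro hbb)) hab
    · refine .mp (.mp (.thm (ih g hg)) ?_) Der.head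
      exact (Der.head.tail.tail).andE2

def implNF (A B : List CForm) : List CForm :=
  match B with
  | [] => [cA (A.map CForm.neg)]
  | b :: B' => implNFne A (b :: B')

theorem implNF_fwd (A B : List CForm) :
    MTThm (((dOr A).impl (dOr B)).impl (dOr (implNF A B))) := by
  cases B with
  | nil =>
    have h : MTThm (((dOr A).impl (dOr [])).impl (cA (A.map CForm.neg)).toMT) := by
      refine cA_introMT (fun γ hγ => ?_)
      obtain ⟨α, hα, rfl⟩ := List.mem_map.1 hγ
      apply der_nil; apply ded; apply ded
      exact .mp (Der.head.tail) (.mp (.thm (dOr_intro hα)) Der.head)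
    refine h.comp ?_
    apply der_nil; apply ded
    exact Der.orI1 _ Der.head
  | cons b B' => exact implNFne_fwd A b B'

theorem implNF_bwd (A B : List CForm) :
    ∀ γ ∈ implNF A B, MTThm (γ.toMT.impl ((dOr A).impl (dOr B))) := by
  cases B with
  | nil =>
    intro γ hγ
    simp [implNF] at hγ; subst hγ
    have h : MTThm ((dOr A).impl ((cA (A.map CForm.neg)).toMT.impl (dOr []))) := by
      refine dOr_elim (fun α hα => ?_)
      apply der_nil; apply ded; apply ded
      refine .mp (.mp (.thm (cA_elim (γ := α.neg) (List.mem_map_of_mem hα))) Der.head) ?_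
      exact Der.head.tail
    exact swapImp h
  | cons b B' => exact implNFne_bwd A (b :: B')

theorem box_fwd (a : CForm) (A : List CForm) :
    MTThm ((box (dOr (a :: A))).impl (dOr ((a :: A).map CForm.box))) := by
  induction A generalizing a with
  | nil =>
    rw [dOr_cons]
    refine (MTThm.ax (.boxOr _ _)).comp (orElimT ?_ ?_)
    · exact dOr_intro (γ := a.box) (by simp)
    · refine MTThm.comp ?_ (dOr_intro (γ := a.box) (by simp))
      exact boxMono (MTThm.ax (.ipc7 _))
  | cons a' A ih =>
    rw [dOr_cons]
    refine (MTThm.ax (.boxOr _ _)).comp (orElimT ?_ ?_)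
    · exact dOr_intro (γ := a.box) (by simp)
    · refine (ih a').comp (dOr_mono ?_)
      intro δ hδ; simp at hδ ⊢; tauto

theorem dia_fwd (a : CForm) (A : List CForm) :
    MTThm ((dia (dOr (a :: A))).impl (dOr ((a :: A).map CForm.dia))) := by
  induction A generalizing a with
  | nil =>
    rw [dOr_cons]
    refine (MTThm.ax (.diaOr _ _)).comp (orElimT ?_ ?_)
    · exact dOr_intro (γ := a.dia) (by simp)
    · refine MTThm.comp ?_ (dOr_intro (γ := a.dia) (by simp))
      exact diaMono (MTThm.ax (.ipc7 _))
  | cons a' A ih =>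
    rw [dOr_cons]
    refine (MTThm.ax (.diaOr _ _)).comp (orElimT ?_ ?_)
    · exact dOr_intro (γ := a.dia) (by simp)
    · refine (ih a').comp (dOr_mono ?_)
      intro δ hδ; simp at hδ ⊢; tauto

/-- excluded-middle products -/
def emNF : List CForm → List CForm
  | [] => [cTop]
  | α :: αs => prodWith (fun x g => x.and g) [α, α.neg] (emNF αs)

theorem em_fwd (αs : List CForm) :
    MTThm ((bigAnd (αs.map exclMid)).impl (dOr (emNF αs))) := by
  induction αs with
  | nil =>
    apply der_nil; apply ded
    exact Der.orI1 _ (Der.id _)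
  | cons α αs ih =>
    have hα : MTThm ((exclMid α).impl (dOr [α, α.neg])) := by
      refine orElimT (dOr_intro (by simp)) ?_
      exact dOr_intro (γ := α.neg) (by simp)
    cases αs with
    | nil =>
      -- bigAnd [exclMid α] = exclMid α
      show MTThm ((exclMid α).impl _)
      refine MTThm.comp ?_ (orProd (A := [α, α.neg]) (B := emNF [])
        (f := fun x g => x.and g) (fun x _ g _ => der_nil (Der.id _)))
      apply der_nil; apply ded
      exact Der.andI (.mp (.thm hα) Der.head) (Der.orI1 _ (Der.id _))
    | cons α' αs' =>
      show MTThm (((exclMid α).and (bigAnd ((α' :: αs').map exclMid))).impl _)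
      exact (andMono hα ih).comp (orProd (fun x _ g _ => der_nil (Der.id _)))

theorem em_bwd (αs : List CForm) :
    ∀ γ ∈ emNF αs, MTThm (γ.toMT.impl (bigAnd (αs.map exclMid))) := by
  induction αs with
  | nil =>
    intro γ hγ
    simp [emNF] at hγ; subst hγ
    exact der_nil (Der.id _)
  | cons α αs ih =>
    intro γ hγ
    obtain ⟨x, hx, g, hg, rfl⟩ := mem_prodWith.1 hγ
    have hxem : MTThm (x.toMT.impl (exclMid α)) := by
      rcases (by simpa using hx : x = α ∨ x = α.neg) with rfl | rfl
      · exact MTThm.ax (.ipc5a _ _)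
      · exact MTThm.ax (.ipc5b _ _)
    cases αs with
    | nil =>
      show MTThm (((x.and g).toMT).impl (exclMid α))
      exact (MTThm.ax (.ipc3a _ _)).comp hxem
    | cons α' αs' =>
      show MTThm (((x.and g).toMT).impl ((exclMid α).and (bigAnd ((α' :: αs').map exclMid))))
      exact andMono hxem (ih g hg)

/-- dep unfolding into NF shape -/
def depNF (αs : List CForm) (β : CForm) : List CForm :=
  implNF (emNF αs) [β, β.neg]

theorem dep_fwd (αs : List CForm) (β : CForm) :
    MTThm ((MTForm.dep αs β).impl (dOr (depNF αs β))) := by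
  have h1 : MTThm ((MTForm.dep αs β).impl
      ((bigAnd (αs.map exclMid)).impl (exclMid β))) :=
    (MTThm.ax (.depAx αs β)).andE1
  have h2 : MTThm (((bigAnd (αs.map exclMid)).impl (exclMid β)).impl
      ((dOr (emNF αs)).impl (dOr [β, β.neg]))) := by
    refine implMono (dOr_elim (em_bwd αs)) ?_
    refine orElimT (dOr_intro (by simp)) (dOr_intro (γ := β.neg) (by simp))
  exact (h1.comp h2).comp (implNF_fwd (emNF αs) [β, β.neg])

theorem dep_bwd (αs : List CForm) (β : CForm) :
    ∀ γ ∈ depNF αs β, MTThm (γ.toMT.impl (MTForm.dep αs β)) := by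
  intro γ hγ
  have h1 : MTThm (γ.toMT.impl ((dOr (emNF αs)).impl (dOr [β, β.neg]))) :=
    implNF_bwd _ _ γ hγ
  have h2 : MTThm (((dOr (emNF αs)).impl (dOr [β, β.neg])).impl
      ((bigAnd (αs.map exclMid)).impl (exclMid β))) := by
    refine implMono (em_fwd αs) ?_
    refine dOr_elim (fun δ hδ => ?_)
    rcases (by simpa using hδ : δ = β ∨ δ = β.neg) with rfl | rfl
    · exact MTThm.ax (.ipc5a _ _)
    · exact MTThm.ax (.ipc5b _ _)
  exact (h1.comp h2).comp (MTThm.ax (.depAx αs β)).andE2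

end MTP
/-! ### Section 4c: tensor distribution, pvars bookkeeping, main normal form -/

namespace MTP
open MTForm

theorem tensor_fwd (a : CForm) (A : List CForm) (b : CForm) (B : List CForm) :
    MTThm (((dOr (a :: A)).tensor (dOr (b :: B))).impl
      (dOr (prodWith (fun x y => x.tensor y) (a :: A) (b :: B)))) := by
  induction A generalizing a with
  | nil =>
    rw [dOr_cons]
    refine tensorOrL.comp (orElimT ?_ ?_)
    · refine (tensor_map a b B).comp (dOr_mono ?_)
      intro δ hδ
      obtain ⟨b', hb', rfl⟩ := List.mem_map.1 hδ
      exact mem_prodWith.2 ⟨a, by simp, b', hb', rfl⟩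
    · refine MTThm.comp (tensorMono (φ' := a.toMT) (MTThm.ax (.ipc7 _)) (der_nil (Der.id _))) ?_
      refine (tensor_map a b B).comp (dOr_mono ?_)
      intro δ hδ
      obtain ⟨b', hb', rfl⟩ := List.mem_map.1 hδ
      exact mem_prodWith.2 ⟨a, by simp, b', hb', rfl⟩
  | cons a' A ih =>
    rw [dOr_cons]
    refine tensorOrL.comp (orElimT ?_ ?_)
    · refine (tensor_map a b B).comp (dOr_mono ?_)
      intro δ hδ
      obtain ⟨b', hb', rfl⟩ := List.mem_map.1 hδ
      exact mem_prodWith.2 ⟨a, by simp, b', hb', rfl⟩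
    · refine (ih a').comp (dOr_mono ?_)
      intro δ hδ
      obtain ⟨x, hx, y, hy, rfl⟩ := mem_prodWith.1 hδ
      refine mem_prodWith.2 ⟨x, ?_, y, hy, rfl⟩
      simp at hx ⊢; tauto

/-! pvars bookkeeping -/

theorem pvars_toMT (α : CForm) : (α.toMT).pvars = α.pvars := by
  induction α with
  | var p => rfl
  | bot => rfl
  | and α β ih1 ih2 => simp [CForm.toMT, MTForm.pvars, CForm.pvars, ih1, ih2]
  | tensor α β ih1 ih2 => simp [CForm.toMT, MTForm.pvars, CForm.pvars, ih1, ih2]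
  | impl α β ih1 ih2 => simp [CForm.toMT, MTForm.pvars, CForm.pvars, ih1, ih2]
  | box α ih => simp [CForm.toMT, MTForm.pvars, CForm.pvars, ih]
  | dia α ih => simp [CForm.toMT, MTForm.pvars, CForm.pvars, ih]

theorem pvars_neg (α : CForm) : α.neg.pvars = α.pvars := by
  simp [CForm.neg, CForm.pvars]

theorem pvars_cTop : cTop.pvars = ∅ := by simp [cTop, CForm.pvars]

theorem pvars_cA {L : List CForm} :
    (cA L).pvars ⊆ {p | ∃ γ ∈ L, p ∈ γ.pvars} := by
  induction L with
  | nil => simp [cA, CForm.pvars]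
  | cons γ L ih =>
    simp only [cA, CForm.pvars]
    intro p hp
    rcases hp with hp | hp
    · exact ⟨γ, by simp, hp⟩
    · obtain ⟨δ, hδ, hpδ⟩ := ih hp
      exact ⟨δ, by simp [hδ], hpδ⟩

theorem pvars_implNFne {A B : List CForm} {γ : CForm} (h : γ ∈ implNFne A B) :
    γ.pvars ⊆ {p | ∃ δ ∈ A, p ∈ δ.pvars} ∪ {p | ∃ δ ∈ B, p ∈ δ.pvars} := by
  induction A generalizing γ with
  | nil =>
    simp [implNFne] at h; subst h
    simp [pvars_cTop]
  | cons a A ih =>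
    obtain ⟨x, hx, g, hg, rfl⟩ := mem_prodWith.1 h
    obtain ⟨b, hb, rfl⟩ := List.mem_map.1 hx
    intro p hp
    simp only [CForm.pvars] at hp
    rcases hp with (hp | hp) | hp
    · exact Or.inl ⟨a, by simp, hp⟩
    · exact Or.inr ⟨b, hb, hp⟩
    · rcases ih hg hp with ⟨δ, hδ, hpδ⟩ | hB
      · exact Or.inl ⟨δ, by simp [hδ], hpδ⟩
      · exact Or.inr hB

theorem pvars_implNF {A B : List CForm} {γ : CForm} (h : γ ∈ implNF A B) :
    γ.pvars ⊆ {p | ∃ δ ∈ A, p ∈ δ.pvars} ∪ {p | ∃ δ ∈ B, p ∈ δ.pvars} := by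
  cases B with
  | nil =>
    simp [implNF] at h; subst h
    refine pvars_cA.trans ?_
    intro p hp
    obtain ⟨δ, hδ, hpδ⟩ := hp
    obtain ⟨δ', hδ', rfl⟩ := List.mem_map.1 hδ
    rw [pvars_neg] at hpδ
    exact Or.inl ⟨δ', hδ', hpδ⟩
  | cons b B' => exact pvars_implNFne h

theorem pvars_emNF {αs : List CForm} {γ : CForm} (h : γ ∈ emNF αs) :
    γ.pvars ⊆ {p | ∃ α ∈ αs, p ∈ α.pvars} := by
  induction αs generalizing γ with
  | nil =>
    simp [emNF] at h; subst h; simp [pvars_cTop]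
  | cons α αs ih =>
    obtain ⟨x, hx, g, hg, rfl⟩ := mem_prodWith.1 h
    intro p hp
    simp only [CForm.pvars] at hp
    rcases hp with hp | hp
    · have hxp : p ∈ α.pvars := by
        rcases (by simpa using hx : x = α ∨ x = α.neg) with rfl | rfl
        · exact hp
        · rwa [pvars_neg] at hp
      exact ⟨α, by simp, hxp⟩
    · obtain ⟨δ, hδ, hpδ⟩ := ih hg hp
      exact ⟨δ, by simp [hδ], hpδ⟩

/-- main disjunctive normal form theorem -/
theorem NF (φ : MTForm) : ∃ L : List CForm, L ≠ [] ∧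
    (∀ γ ∈ L, γ.pvars ⊆ φ.pvars) ∧
    MTThm (φ.impl (dOr L)) ∧ MTThm ((dOr L).impl φ) := by
  induction φ with
  | var p =>
    refine ⟨[.var p], by simp, by simp [CForm.pvars, MTForm.pvars], ?_, ?_⟩
    · exact MTThm.ax (.ipc5a _ _)
    · exact orElimT (der_nil (Der.id _)) (MTThm.ax (.ipc7 _))
  | bot =>
    refine ⟨[.bot], by simp, by simp [CForm.pvars], ?_, ?_⟩
    · exact MTThm.ax (.ipc5a _ _)
    · exact orElimT (der_nil (Der.id _)) (MTThm.ax (.ipc7 _))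
  | dep αs β =>
    refine ⟨depNF αs β, implNFne_ne (by simp), ?_, dep_fwd αs β,
      dOr_elim (dep_bwd αs β)⟩
    intro γ hγ
    refine (pvars_implNF hγ).trans ?_
    intro p hp
    simp only [MTForm.pvars]
    rcases hp with hp | hp
    · obtain ⟨δ, hδ, hpδ⟩ := hp
      obtain ⟨α', hα', hpα'⟩ := pvars_emNF hδ hpδ
      exact Or.inl ⟨α', hα', hpα'⟩
    · obtain ⟨δ, hδ, hpδ⟩ := hp
      rcases (by simpa using hδ : δ = β ∨ δ = β.neg) with rfl | rfl
      · exact Or.inr hpδ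
      · exact Or.inr (by rwa [pvars_neg] at hpδ)
  | and φ ψ ih1 ih2 =>
    obtain ⟨L1, hne1, hv1, hf1, hb1⟩ := ih1
    obtain ⟨L2, hne2, hv2, hf2, hb2⟩ := ih2
    refine ⟨prodWith (fun x y => x.and y) L1 L2, ?_, ?_, ?_, ?_⟩
    · obtain ⟨a, ha⟩ := List.exists_mem_of_ne_nil _ hne1
      obtain ⟨b, hb⟩ := List.exists_mem_of_ne_nil _ hne2
      exact List.ne_nil_of_mem (mem_prodWith.2 ⟨a, ha, b, hb, rfl⟩)
    · intro γ hγ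
      obtain ⟨x, hx, y, hy, rfl⟩ := mem_prodWith.1 hγ
      intro p hp
      simp only [CForm.pvars] at hp
      simp only [MTForm.pvars]
      rcases hp with hp | hp
      · exact Or.inl (hv1 x hx hp)
      · exact Or.inr (hv2 y hy hp)
    · exact (andMono hf1 hf2).comp (orProd (fun x _ y _ => der_nil (Der.id _)))
    · refine dOr_elim (fun γ hγ => ?_)
      obtain ⟨x, hx, y, hy, rfl⟩ := mem_prodWith.1 hγ
      exact andMono ((dOr_intro hx).comp hb1) ((dOr_intro hy).comp hb2)
  | tensor φ ψ ih1 ih2 =>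
    obtain ⟨L1, hne1, hv1, hf1, hb1⟩ := ih1
    obtain ⟨L2, hne2, hv2, hf2, hb2⟩ := ih2
    obtain ⟨a, A, rfl⟩ := List.exists_cons_of_ne_nil hne1
    obtain ⟨b, B, rfl⟩ := List.exists_cons_of_ne_nil hne2
    refine ⟨prodWith (fun x y => x.tensor y) (a :: A) (b :: B), ?_, ?_, ?_, ?_⟩
    · exact List.ne_nil_of_mem (mem_prodWith.2 ⟨a, by simp, b, by simp, rfl⟩)
    · intro γ hγ
      obtain ⟨x, hx, y, hy, rfl⟩ := mem_prodWith.1 hγ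
      intro p hp
      simp only [CForm.pvars] at hp
      simp only [MTForm.pvars]
      rcases hp with hp | hp
      · exact Or.inl (hv1 x hx hp)
      · exact Or.inr (hv2 y hy hp)
    · exact (tensorMono hf1 hf2).comp (tensor_fwd a A b B)
    · refine dOr_elim (fun γ hγ => ?_)
      obtain ⟨x, hx, y, hy, rfl⟩ := mem_prodWith.1 hγ
      exact tensorMono ((dOr_intro hx).comp hb1) ((dOr_intro hy).comp hb2)
  | or φ ψ ih1 ih2 =>
    obtain ⟨L1, hne1, hv1, hf1, hb1⟩ := ih1
    obtain ⟨L2, hne2, hv2, hf2, hb2⟩ := ih2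
    refine ⟨L1 ++ L2, by simp [hne1], ?_, ?_, ?_⟩
    · intro γ hγ p hp
      simp only [MTForm.pvars]
      rcases List.mem_append.1 hγ with h | h
      · exact Or.inl (hv1 γ h hp)
      · exact Or.inr (hv2 γ h hp)
    · refine orElimT (hf1.comp (dOr_mono ?_)) (hf2.comp (dOr_mono ?_)) <;>
        (intro γ hγ; simp [hγ])
    · refine dOr_elim (fun γ hγ => ?_)
      rcases List.mem_append.1 hγ with h | h
      · exact ((dOr_intro h).comp hb1).comp (MTThm.ax (.ipc5a _ _))
      · exact ((dOr_intro h).comp hb2).comp (MTThm.ax (.ipc5b _ _))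
  | impl φ ψ ih1 ih2 =>
    obtain ⟨L1, hne1, hv1, hf1, hb1⟩ := ih1
    obtain ⟨L2, hne2, hv2, hf2, hb2⟩ := ih2
    refine ⟨implNF L1 L2, ?_, ?_, ?_, ?_⟩
    · cases L2 with
      | nil => simp [implNF]
      | cons b B' => exact implNFne_ne (by simp)
    · intro γ hγ
      refine (pvars_implNF hγ).trans ?_
      intro p hp
      simp only [MTForm.pvars]
      rcases hp with ⟨δ, hδ, hpδ⟩ | ⟨δ, hδ, hpδ⟩
      · exact Or.inl (hv1 δ hδ hpδ)
      · exact Or.inr (hv2 δ hδ hpδ)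
    · exact (implMono hb1 hf2).comp (implNF_fwd L1 L2)
    · refine dOr_elim (fun γ hγ => ?_)
      exact (implNF_bwd L1 L2 γ hγ).comp (implMono hf1 hb2)
  | box φ ih =>
    obtain ⟨L, hne, hv, hf, hb⟩ := ih
    obtain ⟨a, A, rfl⟩ := List.exists_cons_of_ne_nil hne
    refine ⟨(a :: A).map CForm.box, by simp, ?_, ?_, ?_⟩
    · intro γ hγ
      obtain ⟨x, hx, rfl⟩ := List.mem_map.1 hγ
      intro p hp
      simp only [CForm.pvars] at hp
      exact hv x hx hp
    · exact (boxMono hf).comp (box_fwd a A)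
    · refine dOr_elim (fun γ hγ => ?_)
      obtain ⟨x, hx, rfl⟩ := List.mem_map.1 hγ
      exact boxMono ((dOr_intro hx).comp hb)
  | dia φ ih =>
    obtain ⟨L, hne, hv, hf, hb⟩ := ih
    obtain ⟨a, A, rfl⟩ := List.exists_cons_of_ne_nil hne
    refine ⟨(a :: A).map CForm.dia, by simp, ?_, ?_, ?_⟩
    · intro γ hγ
      obtain ⟨x, hx, rfl⟩ := List.mem_map.1 hγ
      intro p hp
      simp only [CForm.pvars] at hp
      exact hv x hx hp
    · exact (diaMono hf).comp (dia_fwd a A)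
    · refine dOr_elim (fun γ hγ => ?_)
      obtain ⟨x, hx, rfl⟩ := List.mem_map.1 hγ
      exact diaMono ((dOr_intro hx).comp hb)

end MTP
/-! ### Section 5a: modal types -/

namespace MTP
open MTForm

/-- modal depth of a classical formula -/
def mdepth : CForm → ℕ
  | .var _ => 0
  | .bot => 0
  | .and α β => max (mdepth α) (mdepth β)
  | .tensor α β => max (mdepth α) (mdepth β)
  | .impl α β => max (mdepth α) (mdepth β)
  | .box α => mdepth α + 1
  | .dia α => mdepth α + 1

/-- type trees: a sign assignment and a list of successor types -/
inductive Ty : Type where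
  | mk : List (ℕ × Bool) → List Ty → Ty

def Ty.sgn : Ty → List (ℕ × Bool) | mk s _ => s
def Ty.suc : Ty → List Ty | mk _ S => S

/-- well-formedness of a type over a variable list, at a depth -/
def TWF (vs : List ℕ) : ℕ → Ty → Prop
  | 0, .mk sg S => sg.map Prod.fst = vs ∧ S = []
  | d+1, .mk sg S => sg.map Prod.fst = vs ∧ ∀ s ∈ S, TWF vs d s

def lit : ℕ × Bool → CForm
  | (p, true) => .var p
  | (p, false) => (CForm.var p).neg

/-- the characteristic classical formula of a type -/
def tyF : ℕ → Ty → CForm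
  | 0, .mk sg _ => cA (sg.map lit)
  | d+1, .mk sg S =>
      cA (sg.map lit ++ (S.map fun s => (tyF d s).dia) ++ [(cT (S.map (tyF d))).box])

def lookB : List (ℕ × Bool) → ℕ → Bool
  | [], _ => false
  | (q, b) :: sg, p => if q = p then b else lookB sg p

/-- decision of a classical formula at a type -/
def csat : Ty → CForm → Bool
  | t, .var p => lookB t.sgn p
  | _, .bot => false
  | t, .and α β => csat t α && csat t β
  | t, .tensor α β => csat t α || csat t β
  | t, .impl α β => !csat t α || csat t β
  | t, .box α => t.suc.all fun s => csat s α
  | t, .dia α => t.suc.any fun s => csat s α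

theorem lookB_mem {sg : List (ℕ × Bool)} {p : ℕ} (h : p ∈ sg.map Prod.fst) :
    (p, lookB sg p) ∈ sg := by
  induction sg with
  | nil => simp at h
  | cons qb sg ih =>
    obtain ⟨q, b⟩ := qb
    by_cases hq : q = p
    · subst hq; simp [lookB]
    · have hp : p ∈ sg.map Prod.fst := by
        rcases List.mem_map.1 h with ⟨x, hx, hx2⟩
        rcases List.mem_cons.1 hx with rfl | hx'
        · exact absurd hx2 (by simpa using hq)
        · exact List.mem_map.2 ⟨x, hx', hx2⟩
      simp only [lookB, if_neg hq]
      exact List.mem_cons_of_mem _ (ih hp)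

theorem lookB_eq_of_mem {sg : List (ℕ × Bool)} {p : ℕ} {b : Bool}
    (hnd : (sg.map Prod.fst).Nodup) (h : (p, b) ∈ sg) : lookB sg p = b := by
  induction sg with
  | nil => simp at h
  | cons qb sg ih =>
    obtain ⟨q, c⟩ := qb
    have hnd' : q ∉ sg.map Prod.fst ∧ (sg.map Prod.fst).Nodup := by
      rw [List.map_cons] at hnd
      exact List.nodup_cons.1 hnd
    rcases List.mem_cons.1 h with h' | h'
    · injection h' with h1 h2
      subst h1; subst h2
      simp [lookB]
    · have hq : q ≠ p := by
        rintro rfl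
        exact hnd'.1 (List.mem_map.2 ⟨(q, b), h', rfl⟩)
      simp only [lookB, if_neg hq]
      exact ih hnd'.2 h'

/-- every type proves its literals -/
theorem tyF_lit {vs : List ℕ} {d : ℕ} {sg : List (ℕ × Bool)} {S : List Ty}
    (hw : TWF vs d (.mk sg S)) {pb : ℕ × Bool} (h : pb ∈ sg) :
    MTThm ((tyF d (.mk sg S)).toMT.impl (lit pb).toMT) := by
  cases d with
  | zero => exact cA_elim (List.mem_map_of_mem h)
  | succ d =>
    refine cA_elim ?_
    refine List.mem_append_left _ (List.mem_append_left _ ?_)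
    exact List.mem_map_of_mem h

theorem tyF_dia {d : ℕ} {sg : List (ℕ × Bool)} {S : List Ty} {s : Ty}
    (h : s ∈ S) :
    MTThm ((tyF (d+1) (.mk sg S)).toMT.impl ((tyF d s).dia).toMT) := by
  refine cA_elim ?_
  refine List.mem_append_left _ (List.mem_append_right _ ?_)
  exact List.mem_map_of_mem h

theorem tyF_box {d : ℕ} {sg : List (ℕ × Bool)} {S : List Ty} :
    MTThm ((tyF (d+1) (.mk sg S)).toMT.impl ((cT (S.map (tyF d))).box).toMT) :=
  cA_elim (List.mem_append_right _ (by simp))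

theorem implAndI {φ ψ χ : MTForm} (h1 : MTThm (φ.impl ψ)) (h2 : MTThm (φ.impl χ)) :
    MTThm (φ.impl (ψ.and χ)) := by
  apply der_nil; apply ded
  exact Der.andI (.mp (.thm h1) .head) (.mp (.thm h2) .head)

/-- the decision lemma: a type decides every classical formula of suitable
depth and vocabulary -/
theorem tyDec {vs : List ℕ} : ∀ {d : ℕ} {t : Ty}, TWF vs d t → ∀ {α : CForm},
    mdepth α ≤ d → (∀ p ∈ α.pvars, p ∈ vs) →
    (csat t α = true → MTThm ((tyF d t).toMT.impl α.toMT)) ∧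
    (csat t α = false → MTThm ((tyF d t).toMT.impl α.neg.toMT)) := by
  intro d t hw α
  induction α generalizing d t with
  | var p =>
    intro _ hv
    obtain ⟨sg, S⟩ := t
    have hmapfst : sg.map Prod.fst = vs := by
      cases d with
      | zero => exact hw.1
      | succ d => exact hw.1
    have hp : p ∈ sg.map Prod.fst := by rw [hmapfst]; exact hv p (by simp [CForm.pvars])
    have hmem := lookB_mem hp
    have hlit := tyF_lit hw hmem
    constructor
    · intro hc
      have : csat (Ty.mk sg S) (.var p) = lookB sg p := rfl
      rw [this] at hc
      rw [hc] at hmem hlit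
      simpa [lit] using hlit
    · intro hc
      have : csat (Ty.mk sg S) (.var p) = lookB sg p := rfl
      rw [this] at hc
      rw [hc] at hmem hlit
      simpa [lit] using hlit
  | bot =>
    intro _ _
    refine ⟨fun hc => by simp [csat] at hc, fun _ => ?_⟩
    apply der_nil; apply ded; apply ded
    exact Der.head
  | and α β ih1 ih2 =>
    intro hd hv
    have hd1 : mdepth α ≤ d := le_trans (le_max_left _ _) hd
    have hd2 : mdepth β ≤ d := le_trans (le_max_right _ _) hd
    have hv1 : ∀ p ∈ α.pvars, p ∈ vs := fun p hp => hv p (Or.inl hp)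
    have hv2 : ∀ p ∈ β.pvars, p ∈ vs := fun p hp => hv p (Or.inr hp)
    have H1 := ih1 hw hd1 hv1
    have H2 := ih2 hw hd2 hv2
    constructor
    · intro hc
      simp [csat] at hc
      exact implAndI (H1.1 hc.1) (H2.1 hc.2)
    · intro hc
      have hc' : (csat t α && csat t β) = false := hc
      by_cases hca : csat t α = true
      · have hcb : csat t β = false := by rw [hca] at hc'; simpa using hc'
        refine (H2.2 hcb).comp ?_
        apply der_nil; apply ded; apply ded
        exact .mp (Der.head.tail) Der.head.andE2
      · have hca' : csat t α = false := by simpa using hca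
        refine (H1.2 hca').comp ?_
        apply der_nil; apply ded; apply ded
        exact .mp (Der.head.tail) Der.head.andE1
  | tensor α β ih1 ih2 =>
    intro hd hv
    have H1 := ih1 hw (le_trans (le_max_left _ _) hd) (fun p hp => hv p (Or.inl hp))
    have H2 := ih2 hw (le_trans (le_max_right _ _) hd) (fun p hp => hv p (Or.inr hp))
    constructor
    · intro hc
      simp [csat] at hc
      rcases hc with hc | hc
      · exact (H1.1 hc).comp tensorI1
      · exact (H2.1 hc).comp tensorI2
    · intro hc
      simp [csat] at hc
      have hna := H1.2 hc.1
      have hnb := H2.2 hc.2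
      apply der_nil; apply ded
      refine .mp (.mp (.axm (.tensor2 α.toMT β.toMT .bot)) ?_) ?_
      · exact .mp (.thm hna) Der.head
      · exact .mp (.thm hnb) Der.head
  | impl α β ih1 ih2 =>
    intro hd hv
    have H1 := ih1 hw (le_trans (le_max_left _ _) hd) (fun p hp => hv p (Or.inl hp))
    have H2 := ih2 hw (le_trans (le_max_right _ _) hd) (fun p hp => hv p (Or.inr hp))
    constructor
    · intro hc
      have hc' : (!csat t α || csat t β) = true := hc
      by_cases hca : csat t α = true
      · have hcb : csat t β = true := by rw [hca] at hc'; simpa using hc'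
        refine (H2.1 hcb).comp ?_
        apply der_nil; apply ded; apply ded
        exact Der.head.tail
      · have hca' : csat t α = false := by simpa using hca
        refine (H1.2 hca').comp ?_
        apply der_nil; apply ded; apply ded
        exact Der.efq (.mp (Der.head.tail) Der.head)
    · intro hc
      have hc' : (!csat t α || csat t β) = false := hc
      have hor := Bool.or_eq_false_iff.1 hc'
      have ha := H1.1 (by simpa using hor.1)
      have hnb := H2.2 hor.2
      apply der_nil; apply ded; apply ded
      refine .mp (.mp (.thm hnb) (Der.head.tail)) ?_
      exact .mp Der.head (.mp (.thm ha) (Der.head.tail))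
  | box α ih =>
    intro hd hv
    cases d with
    | zero => simp [mdepth] at hd
    | succ d =>
      obtain ⟨sg, S⟩ := t
      have hws : ∀ s ∈ S, TWF vs d s := hw.2
      have hdα : mdepth α ≤ d := by simpa [mdepth] using hd
      constructor
      · intro hc
        simp [csat, Ty.suc] at hc
        have hcT : MTThm ((cT (S.map (tyF d))).toMT.impl α.toMT) := by
          refine cT_elim (fun γ hγ => ?_)
          obtain ⟨s, hs, rfl⟩ := List.mem_map.1 hγ
          exact (ih (hws s hs) hdα hv).1 (hc s hs)
        exact (tyF_box).comp (boxMono hcT)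
      · intro hc
        simp [csat, Ty.suc] at hc
        obtain ⟨s, hs, hcs⟩ := hc
        have hns : MTThm ((tyF d s).toMT.impl α.neg.toMT) :=
          (ih (hws s hs) hdα hv).2 (by simpa using hcs)
        have h1 : MTThm (((tyF d s).dia).toMT.impl (dia α.neg.toMT)) := diaMono hns
        -- ◇¬α → ¬□α : from ◇¬α ∧ □α get ⊥ via □α→□¬¬α and diaBoxNegBot α.neg
        have h2 : MTThm ((dia α.neg.toMT).impl ((α.box).neg).toMT) := by
          apply der_nil; apply ded; apply ded
          have hdni : MTThm (α.toMT.impl (α.neg.neg).toMT) := by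
            apply der_nil; apply ded; apply ded
            exact .mp Der.head (Der.head.tail)
          have hb : Der [(α.box).toMT, (dia α.neg.toMT)] (box (α.neg.neg).toMT) :=
            .mp (.thm (boxMono hdni)) Der.head
          refine .mp (.mp (.thm (diaBoxNegBot α.neg)) (Der.head.tail)) ?_
          exact hb
        exact ((tyF_dia hs).comp h1).comp h2
  | dia α ih =>
    intro hd hv
    cases d with
    | zero => simp [mdepth] at hd
    | succ d =>
      obtain ⟨sg, S⟩ := t
      have hws : ∀ s ∈ S, TWF vs d s := hw.2
      have hdα : mdepth α ≤ d := by simpa [mdepth] using hd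
      constructor
      · intro hc
        simp [csat, Ty.suc] at hc
        obtain ⟨s, hs, hcs⟩ := hc
        exact (tyF_dia hs).comp (diaMono ((ih (hws s hs) hdα hv).1 hcs))
      · intro hc
        simp [csat, Ty.suc] at hc
        have hcT : MTThm ((cT (S.map (tyF d))).toMT.impl α.neg.toMT) := by
          refine cT_elim (fun γ hγ => ?_)
          obtain ⟨s, hs, rfl⟩ := List.mem_map.1 hγ
          exact (ih (hws s hs) hdα hv).2 (by simpa using hc s hs)
        have h1 : MTThm (((cT (S.map (tyF d))).box).toMT.impl (box α.neg.toMT)) :=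
          boxMono hcT
        have h2 : MTThm ((box α.neg.toMT).impl ((α.dia).neg).toMT) := by
          apply der_nil; apply ded; apply ded
          exact .mp (.mp (.thm (diaBoxNegBot α)) Der.head) (Der.head.tail)
        exact (tyF_box.comp h1).comp h2

end MTP
/-! ### Section 5b: enumeration of types and exhaustiveness -/

namespace MTP
open MTForm

def allSgn : List ℕ → List (List (ℕ × Bool))
  | [] => [[]]
  | p :: vs => (allSgn vs).flatMap fun sg => [(p, true) :: sg, (p, false) :: sg]

def allTy (vs : List ℕ) : ℕ → List Ty
  | 0 => (allSgn vs).map fun sg => .mk sg []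
  | d+1 => (allSgn vs).flatMap fun sg => ((allTy vs d).sublists).map fun S => Ty.mk sg S

theorem allSgn_fst {vs : List ℕ} : ∀ sg ∈ allSgn vs, sg.map Prod.fst = vs := by
  induction vs with
  | nil => simp [allSgn]
  | cons p vs ih =>
    intro sg hsg
    simp only [allSgn, List.mem_flatMap] at hsg
    obtain ⟨sg', hsg', hmem⟩ := hsg
    rcases (by simpa using hmem : sg = (p, true) :: sg' ∨ sg = (p, false) :: sg') with
      rfl | rfl <;> simp [ih sg' hsg']

theorem allTy_TWF {vs : List ℕ} : ∀ {d : ℕ}, ∀ t ∈ allTy vs d, TWF vs d t := by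
  intro d
  induction d with
  | zero =>
    intro t ht
    simp only [allTy, List.mem_map] at ht
    obtain ⟨sg, hsg, rfl⟩ := ht
    exact ⟨allSgn_fst sg hsg, rfl⟩
  | succ d ih =>
    intro t ht
    simp only [allTy, List.mem_flatMap, List.mem_map] at ht
    obtain ⟨sg, hsg, S, hS, rfl⟩ := ht
    refine ⟨allSgn_fst sg hsg, fun s hs => ih s ?_⟩
    exact (List.mem_sublists.1 hS).mem hs

/-- generic subset/complement enumeration -/
def subComp {α : Type} : List α → List (List α × List α)
  | [] => [([], [])]
  | x :: M => (subComp M).flatMap fun p => [(x :: p.1, p.2), (p.1, x :: p.2)]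

theorem subComp_cover {α : Type} {M : List α} {p : List α × List α}
    (hp : p ∈ subComp M) : ∀ x ∈ M, x ∈ p.1 ∨ x ∈ p.2 := by
  induction M generalizing p with
  | nil => simp
  | cons y M ih =>
    simp only [subComp, List.mem_flatMap] at hp
    obtain ⟨q, hq, hmem⟩ := hp
    intro x hx
    rcases (by simpa using hmem : p = (y :: q.1, q.2) ∨ p = (q.1, y :: q.2)) with rfl | rfl <;>
    · rcases List.mem_cons.1 hx with rfl | hx'
      · simp
      · rcases ih hq x hx' with h | h <;> simp [h]

theorem subComp_fst_sublist {α : Type} {M : List α} {p : List α × List α}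
    (hp : p ∈ subComp M) : p.1.Sublist M := by
  induction M generalizing p with
  | nil => simp [subComp] at hp; simp [hp]
  | cons y M ih =>
    simp only [subComp, List.mem_flatMap] at hp
    obtain ⟨q, hq, hmem⟩ := hp
    rcases (by simpa using hmem : p = (y :: q.1, q.2) ∨ p = (q.1, y :: q.2)) with rfl | rfl
    · exact List.Sublist.cons₂ y (ih (p := q) hq)
    · exact List.Sublist.cons y (ih (p := q) hq)

theorem subComp_snd_sub {α : Type} {M : List α} {p : List α × List α}
    (hp : p ∈ subComp M) : ∀ x ∈ p.2, x ∈ M := by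
  induction M generalizing p with
  | nil => simp [subComp] at hp; simp [hp]
  | cons y M ih =>
    simp only [subComp, List.mem_flatMap] at hp
    obtain ⟨q, hq, hmem⟩ := hp
    rcases (by simpa using hmem : p = (y :: q.1, q.2) ∨ p = (q.1, y :: q.2)) with rfl | rfl
    · intro x hx; exact List.mem_cons_of_mem _ (ih (p := q) hq x hx)
    · intro x hx
      rcases List.mem_cons.1 hx with rfl | hx'
      · simp
      · exact List.mem_cons_of_mem _ (ih (p := q) hq x hx')

theorem topThm : MTThm (cA []).toMT := der_nil topI

theorem cT_single {γ : CForm} (h : MTThm γ.toMT) : MTThm (cT [γ]).toMT :=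
  tensorI1.mp h

theorem cT_cover {L L' : List CForm}
    (h : ∀ γ ∈ L, ∃ M, (∀ δ ∈ M, δ ∈ L') ∧ MTThm (γ.toMT.impl (cT M).toMT)) :
    MTThm ((cT L).toMT.impl (cT L').toMT) := by
  refine cT_elim (fun γ hγ => ?_)
  obtain ⟨M, hM, hi⟩ := h γ hγ
  exact hi.comp (cT_mono hM)

theorem cA_pair {L1 L2 : List CForm} :
    MTThm (((cA L1).toMT.and (cA L2).toMT).impl (cA (L1 ++ L2)).toMT) := by
  refine cA_introMT (fun δ hδ => ?_)
  rcases List.mem_append.1 hδ with h | h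
  · exact (MTThm.ax (.ipc3a _ _)).comp (cA_elim h)
  · exact (MTThm.ax (.ipc3b _ _)).comp (cA_elim h)

/-- product of two tensor theorems -/
theorem cT_prod {L1 L2 L3 : List CForm}
    (h1 : MTThm (cT L1).toMT) (h2 : MTThm (cT L2).toMT)
    (h : ∀ x ∈ L1, ∀ y ∈ L2, ∃ z ∈ L3, MTThm ((x.toMT.and y.toMT).impl z.toMT)) :
    MTThm (cT L3).toMT := by
  have big : MTThm ((cT L1).toMT.impl (((cT L2).impl (cT L3)).toMT)) := by
    refine cT_elim (fun x hx => ?_)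
    have inner : MTThm ((cT L2).toMT.impl ((x.impl (cT L3)).toMT)) := by
      refine cT_elim (fun y hy => ?_)
      obtain ⟨z, hz, hxy⟩ := h x hx y hy
      apply der_nil; apply ded; apply ded
      refine .mp (.thm (cT_intro hz)) ?_
      refine .mp (.thm hxy) ?_
      exact Der.andI Der.head (Der.head.tail)
    exact swapImp inner
  exact (big.mp h1).mp h2

/-- exhaustiveness of sign assignments -/
theorem sgnEx (vs : List ℕ) :
    MTThm ((cT ((allSgn vs).map fun sg => cA (sg.map lit))).toMT) := by
  induction vs with
  | nil => exact cT_single topThm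
  | cons p vs ih =>
    refine MTThm.mp ?_ ih
    refine cT_cover (fun γ hγ => ?_)
    obtain ⟨sg, hsg, rfl⟩ := List.mem_map.1 hγ
    refine ⟨[cA (((p, true) :: sg).map lit), cA (((p, false) :: sg).map lit)], ?_, ?_⟩
    · intro δ hδ
      have h1 : (p, true) :: sg ∈ allSgn (p :: vs) := by
        simp only [allSgn, List.mem_flatMap]
        exact ⟨sg, hsg, by simp⟩
      have h2 : (p, false) :: sg ∈ allSgn (p :: vs) := by
        simp only [allSgn, List.mem_flatMap]
        exact ⟨sg, hsg, by simp⟩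
      rcases List.mem_cons.1 hδ with rfl | hδ'
      · exact List.mem_map.2 ⟨_, h1, rfl⟩
      · rcases List.mem_cons.1 hδ' with rfl | h''
        · exact List.mem_map.2 ⟨_, h2, rfl⟩
        · simp at h''
    · apply der_nil; apply ded
      refine Der.ccases (CForm.var p) ?_ ?_
      · refine thm_der (cT_intro (γ := cA (((p, true) :: sg).map lit)) (by simp)) ?_
        show Der _ ((lit (p, true)).toMT.and (cA (sg.map lit)).toMT)
        exact Der.andI Der.head (Der.head.tail)
      · refine thm_der (cT_intro (γ := cA (((p, false) :: sg).map lit)) (by simp)) ?_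
        show Der _ ((lit (p, false)).toMT.and (cA (sg.map lit)).toMT)
        exact Der.andI Der.head (Der.head.tail)

/-- the ◇/¬◇ conjunction attached to a subset/complement pair -/
def ndc (d : ℕ) (p : List Ty × List Ty) : CForm :=
  cA (p.1.map (fun s => (tyF d s).dia) ++ p.2.map (fun s => ((tyF d s).dia).neg))

/-- product of excluded middles over ◇-formulas -/
theorem ndprod (d : ℕ) (M : List Ty) :
    MTThm ((cT ((subComp M).map (ndc d))).toMT) := by
  induction M with
  | nil => exact cT_single topThm
  | cons t M ih =>
    refine MTThm.mp ?_ ih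
    refine cT_cover (fun γ hγ => ?_)
    obtain ⟨p, hp, rfl⟩ := List.mem_map.1 hγ
    refine ⟨[ndc d (t :: p.1, p.2), ndc d (p.1, t :: p.2)], ?_, ?_⟩
    · intro δ hδ
      have h1 : (t :: p.1, p.2) ∈ subComp (t :: M) := by
        simp only [subComp, List.mem_flatMap]
        exact ⟨p, hp, by simp⟩
      have h2 : (p.1, t :: p.2) ∈ subComp (t :: M) := by
        simp only [subComp, List.mem_flatMap]
        exact ⟨p, hp, by simp⟩
      rcases List.mem_cons.1 hδ with rfl | hδ'
      · exact List.mem_map.2 ⟨_, h1, rfl⟩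
      · rcases List.mem_cons.1 hδ' with rfl | h''
        · exact List.mem_map.2 ⟨_, h2, rfl⟩
        · simp at h''
    · apply der_nil; apply ded
      refine Der.ccases ((tyF d t).dia) ?_ ?_
      · refine thm_der (cT_intro (γ := ndc d (t :: p.1, p.2)) (by simp)) ?_
        show Der _ (((tyF d t).dia).toMT.and (ndc d p).toMT)
        exact Der.andI Der.head (Der.head.tail)
      · refine thm_der (cT_intro (γ := ndc d (p.1, t :: p.2)) (by simp)) ?_
        have hin : MTThm (((mneg ((tyF d t).dia).toMT).and (ndc d p).toMT).impl
            (ndc d (p.1, t :: p.2)).toMT) := by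
          refine cA_introMT (fun δ hδ => ?_)
          rcases List.mem_append.1 hδ with h | h
          · refine (MTThm.ax (.ipc3b _ _)).comp (cA_elim ?_)
            exact List.mem_append_left _ h
          · rcases List.mem_cons.1 h with rfl | h'
            · exact MTThm.ax (.ipc3a _ _)
            · refine (MTThm.ax (.ipc3b _ _)).comp (cA_elim ?_)
              exact List.mem_append_right _ h'
        refine .mp (.thm hin) ?_
        exact Der.andI Der.head (Der.head.tail)

/-- φ implies box of each list member implies box of the conjunction -/
theorem boxCA {φ : MTForm} {L : List CForm}
    (h : ∀ γ ∈ L, MTThm (φ.impl (box γ.toMT))) :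
    MTThm (φ.impl (box (cA L).toMT)) := by
  induction L with
  | nil =>
    have htop : MTThm (box (cA []).toMT) := topThm.nec
    apply der_nil; apply ded
    exact .thm htop
  | cons γ L ih =>
    have h1 := h γ (by simp)
    have h2 := ih (fun δ hδ => h δ (by simp [hδ]))
    apply der_nil; apply ded
    refine .mp (.mp (.thm boxAnd) (.mp (.thm h1) .head)) (.mp (.thm h2) .head)

/-- core: □⊗M together with the ◇-pattern of p implies □⊗p.1 -/
theorem boxCore (d : ℕ) (M : List Ty) (p : List Ty × List Ty)
    (hp : p ∈ subComp M) :
    MTThm ((box (cT (M.map (tyF d))).toMT).impl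
      ((ndc d p).toMT.impl (box (cT (p.1.map (tyF d))).toMT))) := by
  set negs : List CForm := (p.2.map (tyF d)).map CForm.neg with hnegs
  have t1 : MTThm ((cT (M.map (tyF d))).toMT.impl
      (((cA negs).impl (cT (p.1.map (tyF d)))).toMT)) := by
    refine cT_elim (fun γ hγ => ?_)
    obtain ⟨s, hs, rfl⟩ := List.mem_map.1 hγ
    rcases subComp_cover hp s hs with h | h
    · apply der_nil; apply ded; apply ded
      exact thm_der (cT_intro (List.mem_map_of_mem h)) (Der.head.tail)
    · apply der_nil; apply ded; apply ded
      refine Der.efq ?_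
      refine .mp (.mp (.thm (cA_elim (γ := (tyF d s).neg) ?_)) Der.head) (Der.head.tail)
      exact List.mem_map.2 ⟨_, List.mem_map_of_mem h, rfl⟩
  have t2 : MTThm ((box (cT (M.map (tyF d))).toMT).impl
      ((box (cA negs).toMT).impl (box (cT (p.1.map (tyF d))).toMT))) :=
    (boxMono t1).comp (MTThm.ax (.kbox _ _))
  have t3 : MTThm ((ndc d p).toMT.impl (box (cA negs).toMT)) := by
    refine boxCA (fun ν hν => ?_)
    obtain ⟨μ, hμ, rfl⟩ := List.mem_map.1 hν
    obtain ⟨c, hc, rfl⟩ := List.mem_map.1 hμ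
    have h1 : MTThm ((ndc d p).toMT.impl (((tyF d c).dia).neg).toMT) := by
      refine cA_elim (List.mem_append_right _ ?_)
      exact List.mem_map_of_mem hc
    exact h1.comp (negDia_boxNeg (tyF d c))
  apply der_nil; apply ded; apply ded
  refine .mp (.mp (.thm t2) (Der.head.tail)) ?_
  exact .mp (.thm t3) Der.head

/-- the modal part of a type from a subset -/
def tyP (d : ℕ) (S : List Ty) : CForm :=
  cA ((S.map fun s => (tyF d s).dia) ++ [(cT (S.map (tyF d))).box])

/-- exhaustiveness of types -/
theorem tyEx (vs : List ℕ) : ∀ d : ℕ, MTThm ((cT ((allTy vs d).map (tyF d))).toMT) := by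
  intro d
  induction d with
  | zero =>
    have : (allTy vs 0).map (tyF 0) = (allSgn vs).map fun sg => cA (sg.map lit) := by
      simp only [allTy, List.map_map]
      rfl
    rw [this]
    exact sgnEx vs
  | succ d ih =>
    have hbox : MTThm (box (cT ((allTy vs d).map (tyF d))).toMT) := ih.nec
    have hTP : MTThm ((cT ((subComp (allTy vs d)).map fun p => tyP d p.1)).toMT) := by
      refine MTThm.mp ?_ (ndprod d (allTy vs d))
      refine cT_mono2 (fun γ hγ => ?_)
      obtain ⟨p, hp, rfl⟩ := List.mem_map.1 hγ
      refine ⟨tyP d p.1, List.mem_map_of_mem hp, ?_⟩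
      refine cA_introMT (fun δ hδ => ?_)
      rcases List.mem_append.1 hδ with h | h
      · exact cA_elim (List.mem_append_left _ h)
      · have hδ' : δ = (cT (p.1.map (tyF d))).box := by simpa using h
        subst hδ'
        apply der_nil; apply ded
        refine .mp (.mp (.thm (boxCore d (allTy vs d) p hp)) (.thm hbox)) Der.head
    refine cT_prod (sgnEx vs) hTP ?_
    intro x hx y hy
    obtain ⟨sg, hsg, rfl⟩ := List.mem_map.1 hx
    obtain ⟨p, hp, rfl⟩ := List.mem_map.1 hy
    refine ⟨tyF (d+1) (.mk sg p.1), ?_, ?_⟩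
    · refine List.mem_map.2 ⟨.mk sg p.1, ?_, rfl⟩
      simp only [allTy, List.mem_flatMap, List.mem_map]
      exact ⟨sg, hsg, p.1, List.mem_sublists.2 (subComp_fst_sublist hp), rfl⟩
    · have : tyF (d+1) (.mk sg p.1) =
          cA (sg.map lit ++ ((p.1.map fun s => (tyF d s).dia) ++ [(cT (p.1.map (tyF d))).box])) := by
        simp only [tyF]
        rw [List.append_assoc]
      rw [this]
      exact cA_pair
end MTP
/-! ### Section 5c: restriction, amalgamation, extension of types -/

namespace MTP
open MTForm

theorem csat_cA {t : Ty} {L : List CForm} :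
    csat t (cA L) = true ↔ ∀ γ ∈ L, csat t γ = true := by
  induction L with
  | nil => simp [cA, csat]
  | cons γ L ih => simp [cA, csat, ih]

theorem csat_cT {t : Ty} {L : List CForm} :
    csat t (cT L) = true ↔ ∃ γ ∈ L, csat t γ = true := by
  induction L with
  | nil => simp [cT, csat]
  | cons γ L ih => simp [cT, csat, ih]

theorem csat_lit {sg : List (ℕ × Bool)} {S : List Ty} {p : ℕ} {b : Bool} :
    csat (.mk sg S) (lit (p, b)) = true ↔ lookB sg p = b := by
  cases b <;> simp [lit, csat, CForm.neg, Ty.sgn]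

theorem mdepth_lit (pb : ℕ × Bool) : mdepth (lit pb) = 0 := by
  obtain ⟨p, b⟩ := pb; cases b <;> rfl

theorem mdepth_cA {L : List CForm} {n : ℕ} (h : ∀ γ ∈ L, mdepth γ ≤ n) :
    mdepth (cA L) ≤ n := by
  induction L with
  | nil => simp [cA, mdepth]
  | cons γ L ih =>
    simp only [cA, mdepth, max_le_iff]
    exact ⟨h γ (by simp), ih (fun δ hδ => h δ (by simp [hδ]))⟩

theorem mdepth_cT {L : List CForm} {n : ℕ} (h : ∀ γ ∈ L, mdepth γ ≤ n) :
    mdepth (cT L) ≤ n := by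
  induction L with
  | nil => simp [cT, mdepth]
  | cons γ L ih =>
    simp only [cT, mdepth, max_le_iff]
    exact ⟨h γ (by simp), ih (fun δ hδ => h δ (by simp [hδ]))⟩

theorem mdepth_tyF : ∀ (d : ℕ) (t : Ty), mdepth (tyF d t) ≤ d := by
  intro d
  induction d with
  | zero =>
    intro t; obtain ⟨sg, S⟩ := t
    refine mdepth_cA (fun γ hγ => ?_)
    obtain ⟨pb, _, rfl⟩ := List.mem_map.1 hγ
    simp [mdepth_lit]
  | succ d ih =>
    intro t; obtain ⟨sg, S⟩ := t
    refine mdepth_cA (fun γ hγ => ?_)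
    rcases List.mem_append.1 hγ with h | h
    · rcases List.mem_append.1 h with h' | h'
      · obtain ⟨pb, _, rfl⟩ := List.mem_map.1 h'
        simp [mdepth_lit]
      · obtain ⟨s, _, rfl⟩ := List.mem_map.1 h'
        have := ih s
        simp only [mdepth]
        omega
    · have hγ' : γ = (cT (S.map (tyF d))).box := by simpa using h
      subst hγ'
      have : mdepth (cT (S.map (tyF d))) ≤ d := by
        refine mdepth_cT (fun δ hδ => ?_)
        obtain ⟨s, _, rfl⟩ := List.mem_map.1 hδ
        exact ih s
      simp only [mdepth]
      omega

theorem pvars_lit (pb : ℕ × Bool) : (lit pb).pvars = {pb.1} := by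
  obtain ⟨p, b⟩ := pb; cases b <;> simp [lit, CForm.pvars, CForm.neg]

theorem pvars_cT {L : List CForm} :
    (cT L).pvars ⊆ {p | ∃ γ ∈ L, p ∈ γ.pvars} := by
  induction L with
  | nil => simp [cT, CForm.pvars]
  | cons γ L ih =>
    simp only [cT, CForm.pvars]
    intro p hp
    rcases hp with hp | hp
    · exact ⟨γ, by simp, hp⟩
    · obtain ⟨δ, hδ, hpδ⟩ := ih hp
      exact ⟨δ, by simp [hδ], hpδ⟩

theorem pvars_tyF {vs : List ℕ} : ∀ {d : ℕ} {t : Ty}, TWF vs d t →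
    ∀ q ∈ (tyF d t).pvars, q ∈ vs := by
  intro d
  induction d with
  | zero =>
    intro t hw q hq
    obtain ⟨sg, S⟩ := t
    obtain ⟨γ, hγ, hqγ⟩ := pvars_cA hq
    obtain ⟨pb, hpb, rfl⟩ := List.mem_map.1 hγ
    rw [pvars_lit] at hqγ
    rw [show q = pb.1 from hqγ]
    rw [← hw.1]
    exact List.mem_map_of_mem hpb
  | succ d ih =>
    intro t hw q hq
    obtain ⟨sg, S⟩ := t
    obtain ⟨γ, hγ, hqγ⟩ := pvars_cA hq
    rcases List.mem_append.1 hγ with h | h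
    · rcases List.mem_append.1 h with h' | h'
      · obtain ⟨pb, hpb, rfl⟩ := List.mem_map.1 h'
        rw [pvars_lit] at hqγ
        rw [show q = pb.1 from hqγ, ← hw.1]
        exact List.mem_map_of_mem hpb
      · obtain ⟨s, hs, rfl⟩ := List.mem_map.1 h'
        exact ih (hw.2 s hs) q hqγ
    · have hγ' : γ = (cT (S.map (tyF d))).box := by simpa using h
      subst hγ'
      obtain ⟨δ, hδ, hqδ⟩ := pvars_cT hqγ
      obtain ⟨s, hs, rfl⟩ := List.mem_map.1 hδ
      exact ih (hw.2 s hs) q hqδ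

theorem map_fst_filter (sg : List (ℕ × Bool)) (σ : ℕ → Bool) :
    (sg.filter fun x => σ x.1).map Prod.fst = (sg.map Prod.fst).filter σ := by
  induction sg with
  | nil => rfl
  | cons x sg ih => by_cases h : σ x.1 <;> simp [List.filter_cons, h, ih]

/-- restriction of a type to the variables selected by σ -/
def restrict (σ : ℕ → Bool) : ℕ → Ty → Ty
  | 0, .mk sg _ => .mk (sg.filter fun x => σ x.1) []
  | d+1, .mk sg S => .mk (sg.filter fun x => σ x.1) (S.map (restrict σ d))

theorem restrict_TWF {vs : List ℕ} {σ : ℕ → Bool} :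
    ∀ {d : ℕ} {t : Ty}, TWF vs d t → TWF (vs.filter σ) d (restrict σ d t) := by
  intro d
  induction d with
  | zero =>
    intro t hw
    obtain ⟨sg, S⟩ := t
    exact ⟨by rw [map_fst_filter, hw.1], rfl⟩
  | succ d ih =>
    intro t hw
    obtain ⟨sg, S⟩ := t
    refine ⟨by rw [map_fst_filter, hw.1], fun s' hs' => ?_⟩
    obtain ⟨s, hs, rfl⟩ := List.mem_map.1 hs'
    exact ih (hw.2 s hs)

theorem tyF_lit' {d : ℕ} {sg : List (ℕ × Bool)} {S : List Ty} {pb : ℕ × Bool}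
    (h : pb ∈ sg) :
    MTThm ((tyF d (.mk sg S)).toMT.impl (lit pb).toMT) := by
  cases d with
  | zero => exact cA_elim (List.mem_map_of_mem h)
  | succ d =>
    refine cA_elim ?_
    exact List.mem_append_left _ (List.mem_append_left _ (List.mem_map_of_mem h))

/-- a type proves its restriction -/
theorem restrict_der {σ : ℕ → Bool} :
    ∀ {d : ℕ} (t : Ty),
    MTThm ((tyF d t).toMT.impl (tyF d (restrict σ d t)).toMT) := by
  intro d
  induction d with
  | zero =>
    intro t
    obtain ⟨sg, S⟩ := t
    refine cA_introMT (fun δ hδ => ?_)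
    obtain ⟨pb, hpb, rfl⟩ := List.mem_map.1 hδ
    exact cA_elim (List.mem_map_of_mem (List.mem_of_mem_filter hpb))
  | succ d ih =>
    intro t
    obtain ⟨sg, S⟩ := t
    refine cA_introMT (fun δ hδ => ?_)
    rcases List.mem_append.1 hδ with h | h
    · rcases List.mem_append.1 h with h' | h'
      · obtain ⟨pb, hpb, rfl⟩ := List.mem_map.1 h'
        exact tyF_lit' (List.mem_of_mem_filter hpb)
      · obtain ⟨s', hs', rfl⟩ := List.mem_map.1 h'
        obtain ⟨s, hs, rfl⟩ := List.mem_map.1 hs'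
        exact (tyF_dia hs).comp (diaMono (ih s))
    · have hδ' : δ = (cT ((S.map (restrict σ d)).map (tyF d))).box := by simpa using h
      subst hδ'
      refine tyF_box.comp (boxMono (cT_mono2 (fun γ hγ => ?_)))
      obtain ⟨s, hs, rfl⟩ := List.mem_map.1 hγ
      refine ⟨tyF d (restrict σ d s), ?_, ih s⟩
      exact List.mem_map.2 ⟨restrict σ d s, List.mem_map_of_mem hs, rfl⟩

end MTP
/-! ### Section 5d: amalgamation, extension, self-satisfaction -/

namespace MTP
open MTForm

/-- amalgamation of a type over vs1 with a compatible type over vs2,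
adding the σR-part of the second to the first -/
def amalg (σQ σR : ℕ → Bool) : ℕ → Ty → Ty → Ty
  | 0, .mk sg _, .mk sg' _ => .mk (sg ++ sg'.filter fun x => σR x.1) []
  | d+1, .mk sg S, .mk sg' S' =>
      .mk (sg ++ sg'.filter fun x => σR x.1)
        (S.flatMap fun s =>
          (S'.filter fun s' => csat s' (tyF d (restrict σQ d s))).map
            fun s' => amalg σQ σR d s s')

theorem amalg_spec {vs1 vs2 : List ℕ} {σQ σR : ℕ → Bool}
    (h1 : ∀ p ∈ vs2, σR p = true ∨ σQ p = true)
    (h2 : ∀ p, σQ p = true → p ∈ vs2 → p ∈ vs1)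
    (hnd2 : vs2.Nodup) :
    ∀ {d : ℕ} {t w : Ty}, TWF vs1 d t → TWF vs2 d w →
    csat w (tyF d (restrict σQ d t)) = true →
    MTThm ((tyF d (amalg σQ σR d t w)).toMT.impl (tyF d t).toMT) ∧
    MTThm ((tyF d (amalg σQ σR d t w)).toMT.impl (tyF d w).toMT) ∧
    TWF (vs1 ++ vs2.filter σR) d (amalg σQ σR d t w) := by
  intro d
  induction d with
  | zero =>
    intro t w hwt hww hc
    obtain ⟨sg, S⟩ := t
    obtain ⟨sg', S'⟩ := w
    have hkey : (sg ++ sg'.filter fun x => σR x.1).map Prod.fst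
        = vs1 ++ vs2.filter σR := by
      rw [List.map_append, map_fst_filter, hwt.1, hww.1]
    refine ⟨?_, ?_, hkey, rfl⟩
    · refine cA_introMT (fun δ hδ => ?_)
      obtain ⟨pb, hpb, rfl⟩ := List.mem_map.1 hδ
      exact cA_elim (List.mem_map_of_mem (List.mem_append_left _ hpb))
    · refine cA_introMT (fun δ hδ => ?_)
      obtain ⟨pb, hpb, rfl⟩ := List.mem_map.1 hδ
      obtain ⟨p, b⟩ := pb
      have hp2 : p ∈ vs2 := by rw [← hww.1]; exact List.mem_map_of_mem hpb
      rcases h1 p hp2 with hR | hQ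
      · refine cA_elim (List.mem_map_of_mem (List.mem_append_right _ ?_))
        exact List.mem_filter.2 ⟨hpb, hR⟩
      · -- p selected by σQ : value in sg agrees via compatibility
        have hp1 : p ∈ sg.map Prod.fst := by rw [hwt.1]; exact h2 p hQ hp2
        have hmem1 : (p, lookB sg p) ∈ sg := lookB_mem hp1
        have hmemr : (p, lookB sg p) ∈ sg.filter fun x => σQ x.1 :=
          List.mem_filter.2 ⟨hmem1, hQ⟩
        have hcl : csat (.mk sg' S') (lit (p, lookB sg p)) = true := by
          refine csat_cA.1 hc _ ?_
          exact List.mem_map_of_mem hmemr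
        have hval : lookB sg' p = lookB sg p := csat_lit.1 hcl
        have hval2 : lookB sg' p = b :=
          lookB_eq_of_mem (hww.1 ▸ hnd2) hpb
        have hbe : b = lookB sg p := by rw [← hval, hval2]
        subst hbe
        exact cA_elim (List.mem_map_of_mem (List.mem_append_left _ hmem1))
  | succ d ih =>
    intro t w hwt hww hc
    obtain ⟨sg, S⟩ := t
    obtain ⟨sg', S'⟩ := w
    have hkey : (sg ++ sg'.filter fun x => σR x.1).map Prod.fst
        = vs1 ++ vs2.filter σR := by
      rw [List.map_append, map_fst_filter, hwt.1, hww.1]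
    -- compatibility unpacked
    have hcdia : ∀ s ∈ S, ∃ s' ∈ S', csat s' (tyF d (restrict σQ d s)) = true := by
      intro s hs
      have h := csat_cA.1 hc ((tyF d (restrict σQ d s)).dia) ?_
      · simpa [csat, Ty.suc] using h
      · refine List.mem_append_left _ (List.mem_append_right _ ?_)
        exact List.mem_map.2 ⟨restrict σQ d s, List.mem_map_of_mem hs, rfl⟩
    have hcbox : ∀ s' ∈ S', ∃ s ∈ S, csat s' (tyF d (restrict σQ d s)) = true := by
      intro s' hs'
      have h := csat_cA.1 hc ((cT ((S.map (restrict σQ d)).map (tyF d))).box)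
        (List.mem_append_right _ (by simp))
      have h' : csat s' (cT ((S.map (restrict σQ d)).map (tyF d))) = true := by
        rw [List.map_map]
        have := (by simpa [csat, Ty.suc] using h : ∀ x ∈ S', _)
        exact this s' hs'
      obtain ⟨γ, hγ, hcγ⟩ := csat_cT.1 h'
      obtain ⟨r, hr, rfl⟩ := List.mem_map.1 hγ
      obtain ⟨s, hs, rfl⟩ := List.mem_map.1 hr
      exact ⟨s, hs, hcγ⟩
    -- members of the amalgamated successor list
    have hchild : ∀ v ∈ (S.flatMap fun s =>
        (S'.filter fun s' => csat s' (tyF d (restrict σQ d s))).map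
          fun s' => amalg σQ σR d s s'),
        ∃ s ∈ S, ∃ s' ∈ S', csat s' (tyF d (restrict σQ d s)) = true ∧
          v = amalg σQ σR d s s' := by
      intro v hv
      obtain ⟨s, hs, hv'⟩ := List.mem_flatMap.1 hv
      obtain ⟨s', hs', rfl⟩ := List.mem_map.1 hv'
      exact ⟨s, hs, s', List.mem_of_mem_filter hs',
        by simpa using (List.mem_filter.1 hs').2, rfl⟩
    refine ⟨?_, ?_, hkey, fun v hv => ?_⟩
    · -- implies t
      refine cA_introMT (fun δ hδ => ?_)
      rcases List.mem_append.1 hδ with h | h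
      · rcases List.mem_append.1 h with h' | h'
        · obtain ⟨pb, hpb, rfl⟩ := List.mem_map.1 h'
          exact tyF_lit' (List.mem_append_left _ hpb)
        · obtain ⟨s, hs, rfl⟩ := List.mem_map.1 h'
          obtain ⟨s', hs', hcs⟩ := hcdia s hs
          have hmemv : amalg σQ σR d s s' ∈ S.flatMap fun s =>
              (S'.filter fun s'' => csat s'' (tyF d (restrict σQ d s))).map
                fun s'' => amalg σQ σR d s s'' := by
            refine List.mem_flatMap.2 ⟨s, hs, ?_⟩
            exact List.mem_map.2 ⟨s', List.mem_filter.2 ⟨hs', by simpa using hcs⟩, rfl⟩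
          have hIH := (ih (hwt.2 s hs) (hww.2 s' hs') hcs).1
          exact (tyF_dia hmemv).comp (diaMono hIH)
      · have hδ' : δ = (cT ((S.map (tyF d)))).box := by simpa using h
        subst hδ'
        refine tyF_box.comp (boxMono (cT_mono2 (fun γ hγ => ?_)))
        obtain ⟨v, hv, rfl⟩ := List.mem_map.1 hγ
        obtain ⟨s, hs, s', hs', hcs, rfl⟩ := hchild v hv
        exact ⟨tyF d s, List.mem_map_of_mem hs,
          (ih (hwt.2 s hs) (hww.2 s' hs') hcs).1⟩
    · -- implies w
      refine cA_introMT (fun δ hδ => ?_)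
      rcases List.mem_append.1 hδ with h | h
      · rcases List.mem_append.1 h with h' | h'
        · -- literals of w
          obtain ⟨pb, hpb, rfl⟩ := List.mem_map.1 h'
          obtain ⟨p, b⟩ := pb
          have hp2 : p ∈ vs2 := by rw [← hww.1]; exact List.mem_map_of_mem hpb
          rcases h1 p hp2 with hR | hQ
          · refine tyF_lit' (List.mem_append_right _ ?_)
            exact List.mem_filter.2 ⟨hpb, hR⟩
          · have hp1 : p ∈ sg.map Prod.fst := by rw [hwt.1]; exact h2 p hQ hp2
            have hmem1 : (p, lookB sg p) ∈ sg := lookB_mem hp1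
            have hmemr : (p, lookB sg p) ∈ sg.filter fun x => σQ x.1 :=
              List.mem_filter.2 ⟨hmem1, hQ⟩
            have hcl : csat (.mk sg' S') (lit (p, lookB sg p)) = true := by
              refine csat_cA.1 hc _ ?_
              refine List.mem_append_left _ (List.mem_append_left _ ?_)
              exact List.mem_map_of_mem hmemr
            have hval : lookB sg' p = lookB sg p := csat_lit.1 hcl
            have hval2 : lookB sg' p = b :=
              lookB_eq_of_mem (hww.1 ▸ hnd2) hpb
            have hbe : b = lookB sg p := by rw [← hval, hval2]
            subst hbe
            exact tyF_lit' (List.mem_append_left _ hmem1)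
        · -- diamonds of w
          obtain ⟨s', hs', rfl⟩ := List.mem_map.1 h'
          obtain ⟨s, hs, hcs⟩ := hcbox s' hs'
          have hmemv : amalg σQ σR d s s' ∈ S.flatMap fun s =>
              (S'.filter fun s'' => csat s'' (tyF d (restrict σQ d s))).map
                fun s'' => amalg σQ σR d s s'' := by
            refine List.mem_flatMap.2 ⟨s, hs, ?_⟩
            exact List.mem_map.2 ⟨s', List.mem_filter.2 ⟨hs', by simpa using hcs⟩, rfl⟩
          have hIH := (ih (hwt.2 s hs) (hww.2 s' hs') hcs).2.1
          exact (tyF_dia hmemv).comp (diaMono hIH)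
      · have hδ' : δ = (cT ((S'.map (tyF d)))).box := by simpa using h
        subst hδ'
        refine tyF_box.comp (boxMono (cT_mono2 (fun γ hγ => ?_)))
        obtain ⟨v, hv, rfl⟩ := List.mem_map.1 hγ
        obtain ⟨s, hs, s', hs', hcs, rfl⟩ := hchild v hv
        exact ⟨tyF d s', List.mem_map_of_mem hs',
          (ih (hwt.2 s hs) (hww.2 s' hs') hcs).2.1⟩
    · -- well-formedness of children
      obtain ⟨s, hs, s', hs', hcs, rfl⟩ := hchild v hv
      exact (ih (hwt.2 s hs) (hww.2 s' hs') hcs).2.2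

theorem map_fst_pad (pad : List ℕ) :
    pad.map (Prod.fst ∘ fun p => (p, false)) = pad := by
  induction pad with
  | nil => rfl
  | cons q pad ihp => simp only [List.map_cons, ihp]; rfl

/-- extension of a type by fresh variables, set to false -/
def extend (pad : List ℕ) : ℕ → Ty → Ty
  | 0, .mk sg _ => .mk (sg ++ pad.map fun p => (p, false)) []
  | d+1, .mk sg S => .mk (sg ++ pad.map fun p => (p, false)) (S.map (extend pad d))

theorem extend_spec {vs : List ℕ} {pad : List ℕ} :
    ∀ {d : ℕ} {t : Ty}, TWF vs d t →
    MTThm ((tyF d (extend pad d t)).toMT.impl (tyF d t).toMT) ∧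
    TWF (vs ++ pad) d (extend pad d t) := by
  intro d
  induction d with
  | zero =>
    intro t hw
    obtain ⟨sg, S⟩ := t
    have hkey : (sg ++ pad.map fun p => (p, false)).map Prod.fst = vs ++ pad := by
      rw [List.map_append, List.map_map, hw.1, map_fst_pad]
    refine ⟨?_, hkey, rfl⟩
    refine cA_introMT (fun δ hδ => ?_)
    obtain ⟨pb, hpb, rfl⟩ := List.mem_map.1 hδ
    exact cA_elim (List.mem_map_of_mem (List.mem_append_left _ hpb))
  | succ d ih =>
    intro t hw
    obtain ⟨sg, S⟩ := t
    have hkey : (sg ++ pad.map fun p => (p, false)).map Prod.fst = vs ++ pad := by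
      rw [List.map_append, List.map_map, hw.1, map_fst_pad]
    refine ⟨?_, hkey, fun v hv => ?_⟩
    · refine cA_introMT (fun δ hδ => ?_)
      rcases List.mem_append.1 hδ with h | h
      · rcases List.mem_append.1 h with h' | h'
        · obtain ⟨pb, hpb, rfl⟩ := List.mem_map.1 h'
          exact tyF_lit' (List.mem_append_left _ hpb)
        · obtain ⟨s, hs, rfl⟩ := List.mem_map.1 h'
          have hmemv : extend pad d s ∈ S.map (extend pad d) := List.mem_map_of_mem hs
          exact (tyF_dia hmemv).comp (diaMono (ih (hw.2 s hs)).1)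
      · have hδ' : δ = (cT ((S.map (tyF d)))).box := by simpa using h
        subst hδ'
        refine tyF_box.comp (boxMono (cT_mono2 (fun γ hγ => ?_)))
        obtain ⟨v, hv, rfl⟩ := List.mem_map.1 hγ
        obtain ⟨s, hs, rfl⟩ := List.mem_map.1 hv
        exact ⟨tyF d s, List.mem_map_of_mem hs, (ih (hw.2 s hs)).1⟩
    · obtain ⟨s, hs, rfl⟩ := List.mem_map.1 hv
      exact (ih (hw.2 s hs)).2

/-- every type satisfies its own formula -/
theorem tySelf {vs : List ℕ} (hnd : vs.Nodup) :
    ∀ {d : ℕ} {t : Ty}, TWF vs d t → csat t (tyF d t) = true := by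
  intro d
  induction d with
  | zero =>
    intro t hw
    obtain ⟨sg, S⟩ := t
    refine csat_cA.2 (fun γ hγ => ?_)
    obtain ⟨pb, hpb, rfl⟩ := List.mem_map.1 hγ
    obtain ⟨p, b⟩ := pb
    exact csat_lit.2 (lookB_eq_of_mem (hw.1 ▸ hnd) hpb)
  | succ d ih =>
    intro t hw
    obtain ⟨sg, S⟩ := t
    refine csat_cA.2 (fun γ hγ => ?_)
    rcases List.mem_append.1 hγ with h | h
    · rcases List.mem_append.1 h with h' | h'
      · obtain ⟨pb, hpb, rfl⟩ := List.mem_map.1 h'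
        obtain ⟨p, b⟩ := pb
        exact csat_lit.2 (lookB_eq_of_mem (hw.1 ▸ hnd) hpb)
      · obtain ⟨s, hs, rfl⟩ := List.mem_map.1 h'
        have : csat (Ty.mk sg S) ((tyF d s).dia)
            = S.any fun s' => csat s' (tyF d s) := rfl
        rw [this]
        refine List.any_eq_true.2 ⟨s, hs, ?_⟩
        exact ih (hw.2 s hs)
    · have hγ' : γ = (cT (S.map (tyF d))).box := by simpa using h
      subst hγ'
      have : csat (Ty.mk sg S) ((cT (S.map (tyF d))).box)
          = S.all fun s' => csat s' (cT (S.map (tyF d))) := rfl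
      rw [this]
      refine List.all_eq_true.2 (fun s' hs' => ?_)
      refine csat_cT.2 ⟨tyF d s', List.mem_map_of_mem hs', ih (hw.2 s' hs')⟩

end MTP
/-! ### Section 6: team semantics on the type model, soundness -/

namespace MTP
open MTForm Classical

def sucT (X : Set Ty) : Set Ty := {s | ∃ t ∈ X, s ∈ t.suc}

def flatSplit (α : CForm) (Y : Set Ty) : Prop :=
  (∀ t ∈ Y, csat t α = true) ∨ (∀ t ∈ Y, csat t α = false)

def tsem : MTForm → Set Ty → Prop
  | .var p, X => ∀ t ∈ X, lookB t.sgn p = true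
  | .bot, X => X = ∅
  | .dep αs β, X => ∀ Y ⊆ X, (∀ α ∈ αs, flatSplit α Y) → flatSplit β Y
  | .and φ ψ, X => tsem φ X ∧ tsem ψ X
  | .tensor φ ψ, X => ∃ Y Z, X = Y ∪ Z ∧ tsem φ Y ∧ tsem ψ Z
  | .or φ ψ, X => tsem φ X ∨ tsem ψ X
  | .impl φ ψ, X => ∀ Y ⊆ X, tsem φ Y → tsem ψ Y
  | .box φ, X => tsem φ (sucT X)
  | .dia φ, X => ∃ Y, tsem φ Y ∧ ∀ t ∈ X, ∃ s ∈ Y, s ∈ t.suc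

theorem sucT_mono {X Y : Set Ty} (h : Y ⊆ X) : sucT Y ⊆ sucT X := by
  rintro s ⟨t, ht, hs⟩; exact ⟨t, h ht, hs⟩

@[simp] theorem sucT_empty : sucT ∅ = ∅ := by
  ext s; simp [sucT]

/-- downward closure -/
theorem tsem_mono : ∀ {φ : MTForm} {X Y : Set Ty}, Y ⊆ X → tsem φ X → tsem φ Y := by
  intro φ
  induction φ with
  | var p => intro X Y hYX h t ht; exact h t (hYX ht)
  | bot => intro X Y hYX h; subst h; exact Set.subset_eq_empty hYX rfl
  | dep αs β =>
    intro X Y hYX h Z hZY; exact h Z (hZY.trans hYX)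
  | and φ ψ ih1 ih2 =>
    intro X Y hYX h; exact ⟨ih1 hYX h.1, ih2 hYX h.2⟩
  | tensor φ ψ ih1 ih2 =>
    intro X Y hYX h
    obtain ⟨U, V, rfl, hU, hV⟩ := h
    refine ⟨Y ∩ U, Y ∩ V, ?_, ih1 Set.inter_subset_right hU, ih2 Set.inter_subset_right hV⟩
    rw [← Set.inter_union_distrib_left]
    exact (Set.inter_eq_left.2 hYX).symm
  | or φ ψ ih1 ih2 =>
    intro X Y hYX h
    rcases h with h | h
    · exact Or.inl (ih1 hYX h)
    · exact Or.inr (ih2 hYX h)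
  | impl φ ψ ih1 ih2 =>
    intro X Y hYX h Z hZY; exact h Z (hZY.trans hYX)
  | box φ ih =>
    intro X Y hYX h; exact ih (sucT_mono hYX) h
  | dia φ ih =>
    intro X Y hYX h
    obtain ⟨Z, hZ, hhit⟩ := h
    exact ⟨Z, hZ, fun t ht => hhit t (hYX ht)⟩

/-- the empty team satisfies everything -/
theorem tsem_empty : ∀ φ : MTForm, tsem φ ∅ := by
  intro φ
  induction φ with
  | var p => intro t ht; simp at ht
  | bot => rfl
  | dep αs β =>
    intro Y hY _
    have : Y = ∅ := Set.subset_eq_empty hY rfl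
    subst this
    exact Or.inl (fun t ht => by simp at ht)
  | and φ ψ ih1 ih2 => exact ⟨ih1, ih2⟩
  | tensor φ ψ ih1 ih2 => exact ⟨∅, ∅, by simp, ih1, ih2⟩
  | or φ ψ ih1 ih2 => exact Or.inl ih1
  | impl φ ψ ih1 ih2 =>
    intro Y hY h
    have : Y = ∅ := Set.subset_eq_empty hY rfl
    subst this; exact ih2
  | box φ ih => show tsem φ (sucT ∅); rw [sucT_empty]; exact ih
  | dia φ ih => exact ⟨∅, ih, fun t ht => by simp at ht⟩

/-- flatness of classical formulas -/
theorem tsem_flat : ∀ (α : CForm) (X : Set Ty),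
    tsem α.toMT X ↔ ∀ t ∈ X, csat t α = true := by
  intro α
  induction α with
  | var p => intro X; exact Iff.rfl
  | bot =>
    intro X
    constructor
    · intro h; subst h; intro t ht; simp at ht
    · intro h
      ext t; simp only [Set.mem_empty_iff_false, iff_false]
      intro ht; simpa [csat] using h t ht
  | and α β ih1 ih2 =>
    intro X
    constructor
    · rintro ⟨h1, h2⟩ t ht
      have := (ih1 X).1 h1 t ht
      have := (ih2 X).1 h2 t ht
      simp only [csat]; simp_all
    · intro h
      refine ⟨(ih1 X).2 (fun t ht => ?_), (ih2 X).2 (fun t ht => ?_)⟩ <;>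
      · have := h t ht
        simp only [csat, Bool.and_eq_true] at this
        tauto
  | tensor α β ih1 ih2 =>
    intro X
    constructor
    · rintro ⟨Y, Z, rfl, hY, hZ⟩ t ht
      simp only [csat, Bool.or_eq_true]
      rcases ht with ht | ht
      · exact Or.inl ((ih1 Y).1 hY t ht)
      · exact Or.inr ((ih2 Z).1 hZ t ht)
    · intro h
      refine ⟨{t ∈ X | csat t α = true}, {t ∈ X | csat t β = true}, ?_, ?_, ?_⟩
      · ext t
        simp only [Set.mem_union, Set.mem_setOf_eq]
        constructor
        · intro ht
          have := h t ht
          simp only [csat, Bool.or_eq_true] at this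
          tauto
        · rintro (⟨ht, _⟩ | ⟨ht, _⟩) <;> exact ht
      · exact (ih1 _).2 (fun t ht => ht.2)
      · exact (ih2 _).2 (fun t ht => ht.2)
  | impl α β ih1 ih2 =>
    intro X
    constructor
    · intro h t ht
      simp only [csat, Bool.or_eq_true]
      by_cases hα : csat t α = true
      · have h1 : tsem α.toMT {t} := (ih1 _).2 (by simpa using hα)
        have h2 := h {t} (by simpa using ht) h1
        exact Or.inr ((ih2 _).1 h2 t rfl)
      · exact Or.inl (by simpa using hα)
    · intro h Y hYX hα
      refine (ih2 _).2 (fun t ht => ?_)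
      have hc := h t (hYX ht)
      have hca := (ih1 _).1 hα t ht
      simp only [csat, Bool.or_eq_true, hca] at hc
      simpa using hc
  | box α ih =>
    intro X
    constructor
    · intro h t ht
      show (t.suc.all fun s => csat s α) = true
      refine List.all_eq_true.2 (fun s hs => ?_)
      exact (ih _).1 h s ⟨t, ht, hs⟩
    · intro h
      refine (ih _).2 ?_
      rintro s ⟨t, ht, hs⟩
      exact List.all_eq_true.1 (h t ht) s hs
  | dia α ih =>
    intro X
    constructor
    · rintro ⟨Y, hY, hhit⟩ t ht
      obtain ⟨s, hsY, hsuc⟩ := hhit t ht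
      show (t.suc.any fun s => csat s α) = true
      exact List.any_eq_true.2 ⟨s, hsuc, (ih _).1 hY s hsY⟩
    · intro h
      refine ⟨{s | csat s α = true ∧ s ∈ sucT X}, (ih _).2 (fun s hs => hs.1), ?_⟩
      intro t ht
      obtain ⟨s, hs, hcs⟩ := List.any_eq_true.1 (h t ht)
      exact ⟨s, ⟨hcs, ⟨t, ht, hs⟩⟩, hs⟩

theorem tsem_mneg (α : CForm) (X : Set Ty) :
    tsem (mneg α.toMT) X ↔ ∀ t ∈ X, csat t α = false := by
  constructor
  · intro h t ht
    by_contra hc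
    have hc' : csat t α = true := by simpa using hc
    have h1 : tsem α.toMT {t} := (tsem_flat α _).2 (by simpa using hc')
    have := h {t} (by simpa using ht) h1
    simp [tsem] at this
  · intro h Y hYX hα
    show Y = ∅
    ext t
    simp only [Set.mem_empty_iff_false, iff_false]
    intro ht
    have h1 := (tsem_flat α _).1 hα t ht
    have h2 := h t (hYX ht)
    rw [h1] at h2; cases h2

theorem exclMid_sem (α : CForm) (Y : Set Ty) :
    tsem (exclMid α) Y ↔ flatSplit α Y := by
  show tsem α.toMT Y ∨ tsem (mneg α.toMT) Y ↔ _
  rw [tsem_flat, tsem_mneg]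
  exact Iff.rfl

theorem bigAndEM_sem (L : List CForm) (Y : Set Ty) :
    tsem (bigAnd (L.map exclMid)) Y ↔ ∀ α ∈ L, tsem (exclMid α) Y := by
  induction L with
  | nil =>
    simp only [List.map_nil]
    constructor
    · intro _ α h; simp at h
    · intro _ Z hZ h; exact h
  | cons α L ih =>
    cases L with
    | nil => simp [bigAnd]
    | cons α' L' =>
      show tsem (.and (exclMid α) (bigAnd ((α' :: L').map exclMid))) Y ↔ _
      rw [show tsem (.and (exclMid α) (bigAnd ((α' :: L').map exclMid))) Y ↔ _ ∧ _ from Iff.rfl]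
      rw [ih]
      constructor
      · rintro ⟨h1, h2⟩ β hβ
        rcases List.mem_cons.1 hβ with rfl | hβ'
        · exact h1
        · exact h2 β hβ'
      · intro h
        exact ⟨h α (by simp), fun β hβ => h β (by simp [hβ])⟩

/-- soundness of the Hilbert system w.r.t. team semantics on the type model -/
theorem soundness {φ : MTForm} (h : MTThm φ) : ∀ X : Set Ty, tsem φ X := by
  induction h with
  | mp h1 h2 ih1 ih2 =>
    intro X
    exact ih1 X X subset_rfl (ih2 X)
  | nec h ih =>
    intro X
    exact ih (sucT X)
  | ax hax =>
    cases hax with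
    | ipc1 φ ψ =>
      intro X Y hYX h Z hZY _
      exact tsem_mono hZY h
    | ipc2 φ ψ χ =>
      intro X Y hYX h1 Z hZY h2 W hWZ h3
      exact h1 W (hWZ.trans hZY) h3 W subset_rfl (h2 W hWZ h3)
    | ipc3a φ ψ => intro X Y hYX h; exact h.1
    | ipc3b φ ψ => intro X Y hYX h; exact h.2
    | ipc4 φ χ =>
      intro X Y hYX h Z hZY h2
      exact ⟨tsem_mono hZY h, h2⟩
    | ipc5a φ ψ => intro X Y hYX h; exact Or.inl h
    | ipc5b φ ψ => intro X Y hYX h; exact Or.inr h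
    | ipc6 φ ψ χ =>
      intro X Y hYX h1 Z hZY h2 W hWZ h3
      rcases h3 with h3 | h3
      · exact h1 W (hWZ.trans hZY) h3
      · exact h2 W hWZ h3
    | ipc7 φ =>
      intro X Y hYX h
      subst h
      exact tsem_empty φ
    | split α φ ψ =>
      intro X Y hYX h
      set Z := {t ∈ Y | csat t α = true} with hZ
      have hα : tsem α.toMT Z := (tsem_flat _ _).2 (fun t ht => ht.2)
      rcases h Z (fun t ht => ht.1) hα with hc | hc
      · refine Or.inl (fun W hWY hW => ?_)
        have hWZ : W ⊆ Z := fun t ht => ⟨hWY ht, (tsem_flat _ _).1 hW t ht⟩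
        exact tsem_mono hWZ hc
      · refine Or.inr (fun W hWY hW => ?_)
        have hWZ : W ⊆ Z := fun t ht => ⟨hWY ht, (tsem_flat _ _).1 hW t ht⟩
        exact tsem_mono hWZ hc
    | dne α =>
      intro X Y hYX h
      refine (tsem_flat _ _).2 (fun t ht => ?_)
      by_contra hc
      have hc' : csat t α = false := by simpa using hc
      have h1 : tsem (mneg α.toMT) {t} := (tsem_mneg _ _).2 (by simpa using hc')
      have := h {t} (by simpa using ht) h1
      simp [tsem] at this
    | kbox φ ψ =>
      intro X Y hYX h1 Z hZY h2
      exact h1 (sucT Z) (sucT_mono hZY) h2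
    | kdia φ ψ =>
      intro X Y hYX h1 Z hZY h2
      obtain ⟨W, hW, hhit⟩ := h2
      refine ⟨W ∩ sucT Z, ?_, ?_⟩
      · refine h1 (W ∩ sucT Z) ((Set.inter_subset_right).trans (sucT_mono hZY))
          (tsem_mono Set.inter_subset_left hW)
      · intro t ht
        obtain ⟨s, hsW, hsuc⟩ := hhit t ht
        exact ⟨s, ⟨hsW, ⟨t, ht, hsuc⟩⟩, hsuc⟩
    | negDiaBot =>
      intro X Y hYX h
      obtain ⟨W, hW, hhit⟩ := h
      have : W = ∅ := hW
      subst this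
      ext t
      simp only [Set.mem_empty_iff_false, iff_false]
      intro ht
      obtain ⟨s, hs, _⟩ := hhit t ht
      simp at hs
    | diaOr φ ψ =>
      intro X Y hYX h
      obtain ⟨W, hW, hhit⟩ := h
      rcases hW with hW | hW
      · exact Or.inl ⟨W, hW, hhit⟩
      · exact Or.inr ⟨W, hW, hhit⟩
    | fs φ ψ =>
      intro X Y hYX h
      intro Z hZs hφ
      set Y' := {t ∈ Y | ∃ s ∈ Z, s ∈ t.suc} with hY'
      have hdia : tsem (dia φ) Y' := ⟨Z, hφ, fun t ht => ht.2⟩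
      have hbox := h Y' (fun t ht => ht.1) hdia
      refine tsem_mono ?_ hbox
      intro z hz
      obtain ⟨t, ht, hsuc⟩ := hZs hz
      exact ⟨t, ⟨ht, ⟨z, hz, hsuc⟩⟩, hsuc⟩
    | depAx αs β =>
      intro X
      constructor
      · intro Y hYX hdep Z hZY hbig
        have hsplit : ∀ α ∈ αs, flatSplit α Z := by
          intro α hα
          exact (exclMid_sem α Z).1 ((bigAndEM_sem αs Z).1 hbig α hα)
        exact (exclMid_sem β Z).2 (hdep Z hZY hsplit)
      · intro Y hYX himp Z hZY hsplit
        refine (exclMid_sem β Z).1 (himp Z hZY ?_)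
        refine (bigAndEM_sem αs Z).2 (fun α hα => ?_)
        exact (exclMid_sem α Z).2 (hsplit α hα)
    | tensor1 φ ψ =>
      intro X Y hYX h
      exact ⟨Y, ∅, by simp, h, tsem_empty ψ⟩
    | tensor2 φ ψ α =>
      intro X Y hYX h1 Z hZY h2 W hWZ h3
      obtain ⟨U, V, rfl, hU, hV⟩ := h3
      have hUα := h1 U (Set.subset_union_left.trans (hWZ.trans hZY)) hU
      have hVα := h2 V (Set.subset_union_right.trans hWZ) hV
      refine (tsem_flat _ _).2 (fun t ht => ?_)
      rcases ht with ht | ht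
      · exact (tsem_flat _ _).1 hUα t ht
      · exact (tsem_flat _ _).1 hVα t ht
    | tensor3 φ ψ χ θ =>
      intro X Y hYX h1 Z hZY h2 W hWZ h3
      obtain ⟨U, V, rfl, hU, hV⟩ := h3
      exact ⟨U, V, rfl, h1 U (Set.subset_union_left.trans (hWZ.trans hZY)) hU,
        h2 V (Set.subset_union_right.trans hWZ) hV⟩
    | tensorComm φ ψ =>
      intro X Y hYX h
      obtain ⟨U, V, rfl, hU, hV⟩ := h
      exact ⟨V, U, Set.union_comm U V, hV, hU⟩
    | tensorAssoc φ ψ χ =>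
      intro X Y hYX h
      obtain ⟨U, V, rfl, hU, hV⟩ := h
      obtain ⟨V1, V2, rfl, hV1, hV2⟩ := hV
      exact ⟨U ∪ V1, V2, (Set.union_assoc U V1 V2).symm, ⟨U, V1, rfl, hU, hV1⟩, hV2⟩
    | tensorOr φ ψ χ =>
      intro X Y hYX h
      obtain ⟨U, V, rfl, hU, hV⟩ := h
      rcases hV with hV | hV
      · exact Or.inl ⟨U, V, rfl, hU, hV⟩
      · exact Or.inr ⟨U, V, rfl, hU, hV⟩
    | boxDiaNeg α =>
      intro X Y hYX h
      refine ⟨{s ∈ sucT Y | csat s α = false}, (tsem_mneg _ _).2 (fun t ht => ht.2), ?_⟩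
      intro t ht
      by_contra hc
      push_neg at hc
      have hbox : tsem (box α.toMT) {t} := by
        refine (tsem_flat _ _).2 ?_
        rintro s ⟨t', ht', hs⟩
        rw [show t' = t from ht'] at hs
        by_contra hcs
        exact hc s ⟨⟨t, ht, hs⟩, by simpa using hcs⟩ hs
      have := h {t} (by simpa using ht) hbox
      simp [tsem] at this
    | boxOr φ ψ =>
      intro X Y hYX h
      rcases h with h | h
      · exact Or.inl h
      · exact Or.inr h

end MTP
/-! ### Section 7: assembly -/

namespace MTP
open MTForm

theorem list_le_foldr_max (f : CForm → ℕ) (L : List CForm) :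
    ∀ γ ∈ L, f γ ≤ L.foldr (fun x n => max (f x) n) 0 := by
  induction L with
  | nil => simp
  | cons x L ih =>
    intro γ hγ
    rcases List.mem_cons.1 hγ with rfl | h
    · simp
    · exact le_trans (ih γ h) (by simp)

theorem pvars_dOr {L : List CForm} :
    (dOr L).pvars ⊆ {p | ∃ γ ∈ L, p ∈ γ.pvars} := by
  induction L with
  | nil => simp [dOr, bigOr, MTForm.pvars]
  | cons γ L ih =>
    intro p hp
    rcases (hp : p ∈ (γ.toMT).pvars ∪ (dOr L).pvars) with h | h
    · exact ⟨γ, by simp, (pvars_toMT γ) ▸ h⟩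
    · obtain ⟨δ, hδ, h2⟩ := ih h
      exact ⟨δ, by simp [hδ], h2⟩

theorem tsem_dOr {L : List CForm} {X : Set Ty} (h : tsem (dOr L) X) :
    X = ∅ ∨ ∃ γ ∈ L, tsem γ.toMT X := by
  induction L with
  | nil => exact Or.inl h
  | cons γ L ih =>
    rcases (id h : tsem γ.toMT X ∨ tsem (dOr L) X) with h' | h'
    · exact Or.inr ⟨γ, by simp, h'⟩
    · rcases ih h' with h'' | ⟨δ, hδ, h''⟩
      · exact Or.inl h''
      · exact Or.inr ⟨δ, by simp [hδ], h''⟩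

theorem csat_of_thm {γ δ : CForm} {v : Ty} (h : MTThm (γ.toMT.impl δ.toMT))
    (hc : csat v γ = true) : csat v δ = true := by
  have h1 : tsem γ.toMT {v} := (tsem_flat _ _).2 (by simpa using hc)
  have h2 := soundness h {v} {v} subset_rfl h1
  exact (tsem_flat _ _).1 h2 v rfl

theorem csat_neg_of_thm {γ δ : CForm} {v : Ty} (h : MTThm (γ.toMT.impl δ.neg.toMT))
    (hc : csat v γ = true) : csat v δ = false := by
  have h1 : tsem γ.toMT {v} := (tsem_flat _ _).2 (by simpa using hc)
  have h2 := soundness h {v} {v} subset_rfl h1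
  exact (tsem_mneg δ {v}).1 h2 v rfl

theorem filter_eq_nil_of {σ : ℕ → Bool} {l : List ℕ} (h : ∀ p ∈ l, σ p = false) :
    l.filter σ = [] := by
  induction l with
  | nil => rfl
  | cons q l ih =>
    rw [List.filter_cons, if_neg (by simp [h q (by simp)])]
    exact ih (fun p hp => h p (by simp [hp]))

theorem filter_eq_self_of {σ : ℕ → Bool} {l : List ℕ} (h : ∀ p ∈ l, σ p = true) :
    l.filter σ = l := by
  induction l with
  | nil => rfl
  | cons q l ih =>
    rw [List.filter_cons, if_pos (by simp [h q (by simp)])]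
    rw [ih (fun p hp => h p (by simp [hp]))]

/-- exhaustiveness-based elimination: to prove α → δ it suffices to prove
tyF t → δ for every type satisfying α -/
theorem exh_elim {vs : List ℕ} {d : ℕ} {α δ : CForm}
    (hdα : mdepth α ≤ d) (hvα : ∀ p ∈ α.pvars, p ∈ vs)
    (h : ∀ t ∈ allTy vs d, csat t α = true → MTThm ((tyF d t).toMT.impl δ.toMT)) :
    MTThm ((α.impl δ).toMT) := by
  have big : MTThm ((cT ((allTy vs d).map (tyF d))).toMT.impl ((α.impl δ).toMT)) := by
    refine cT_elim (fun γ hγ => ?_)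
    obtain ⟨t, ht, rfl⟩ := List.mem_map.1 hγ
    cases hcs : csat t α with
    | true =>
      have h1 := h t ht hcs
      apply der_nil; apply ded; apply ded
      exact .mp (.thm h1) (Der.head.tail)
    | false =>
      have h1 := (tyDec (allTy_TWF t ht) hdα hvα).2 hcs
      apply der_nil; apply ded; apply ded
      exact Der.efq (.mp (.mp (.thm h1) (Der.head.tail)) Der.head)
  exact big.mp (tyEx vs d)

end MTP
/-- STATEMENT 14: Interpolation Theorem for MT₀: if φ⊢ψ, the variables of φ are
among the pairwise disjoint finite sets P∪Q and those of ψ are among Q∪R, then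
there is an interpolant θ with variables among Q such that φ⊢θ and θ⊢ψ. -/
theorem mt0_interpolation (P Q R : Finset ℕ)
    (hPQ : Disjoint P Q) (hPR : Disjoint P R) (hQR : Disjoint Q R)
    (φ ψ : MTForm) (h : MTDer φ ψ)
    (hφ : φ.pvars ⊆ ↑P ∪ ↑Q) (hψ : ψ.pvars ⊆ ↑Q ∪ ↑R) :
    ∃ θ : MTForm, θ.pvars ⊆ ↑Q ∧ MTDer φ θ ∧ MTDer θ ψ := by
  classical
  open MTP in
  -- variable lists
  set lP := P.toList with hlP
  set lQ := Q.toList with hlQ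
  set lR := R.toList with hlR
  set vs1 := lP ++ lQ with hvs1
  set vs2 := lQ ++ lR with hvs2
  set vsV := (lP ++ lQ) ++ lR with hvsV
  set σQ : ℕ → Bool := fun p => decide (p ∈ Q) with hσQ
  set σR : ℕ → Bool := fun p => decide (p ∈ R) with hσR
  -- basic list facts
  have hdPQ : lP.Disjoint lQ := fun a haP haQ =>
    Finset.disjoint_left.1 hPQ (Finset.mem_toList.1 haP) (Finset.mem_toList.1 haQ)
  have hdPR : lP.Disjoint lR := fun a haP haR =>
    Finset.disjoint_left.1 hPR (Finset.mem_toList.1 haP) (Finset.mem_toList.1 haR)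
  have hdQR : lQ.Disjoint lR := fun a haQ haR =>
    Finset.disjoint_left.1 hQR (Finset.mem_toList.1 haQ) (Finset.mem_toList.1 haR)
  have hnd1 : vs1.Nodup := (P.nodup_toList).append (Q.nodup_toList) hdPQ
  have hnd2 : vs2.Nodup := (Q.nodup_toList).append (R.nodup_toList) hdQR
  have hndV : vsV.Nodup := by
    refine hnd1.append (R.nodup_toList) ?_
    intro a ha haR
    rcases List.mem_append.1 ha with h' | h'
    · exact hdPR h' haR
    · exact hdQR h' haR
  have hPf : ∀ p ∈ lP, σQ p = false := by
    intro p hp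
    simp only [hσQ, decide_eq_false_iff_not]
    exact fun hpQ => hdPQ hp (Finset.mem_toList.2 hpQ)
  have hQt : ∀ p ∈ lQ, σQ p = true := by
    intro p hp
    simp [hσQ, Finset.mem_toList.1 hp]
  have hQf : ∀ p ∈ lQ, σR p = false := by
    intro p hp
    simp only [hσR, decide_eq_false_iff_not]
    exact fun hpR => hdQR hp (Finset.mem_toList.2 hpR)
  have hRt : ∀ p ∈ lR, σR p = true := by
    intro p hp
    simp [hσR, Finset.mem_toList.1 hp]
  have hfQ : vs1.filter σQ = lQ := by
    rw [hvs1, List.filter_append, filter_eq_nil_of hPf, filter_eq_self_of hQt,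
      List.nil_append]
  have hfR : vs2.filter σR = lR := by
    rw [hvs2, List.filter_append, filter_eq_nil_of hQf, filter_eq_self_of hRt,
      List.nil_append]
  -- normal forms
  obtain ⟨Lφ, _, hvφ, f1, b1⟩ := NF φ
  obtain ⟨Lψ, _, hvψ, f2, b2⟩ := NF ψ
  set d := ((Lφ ++ Lψ).map mdepth).foldr max 0 with hd
  have hdepth : ∀ γ ∈ Lφ ++ Lψ, mdepth γ ≤ d := by
    intro γ hγ
    have := list_le_foldr_max mdepth (Lφ ++ Lψ) γ hγ
    refine this.trans (le_of_eq ?_)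
    rw [hd]
    induction (Lφ ++ Lψ) with
    | nil => rfl
    | cons x L ih => simp [List.foldr_cons, ih]
  have hvar1 : ∀ α ∈ Lφ, ∀ p ∈ α.pvars, p ∈ vs1 := by
    intro α hα p hp
    have := hφ (hvφ α hα hp)
    rw [hvs1, List.mem_append]
    rcases this with h' | h'
    · exact Or.inl (Finset.mem_toList.2 h')
    · exact Or.inr (Finset.mem_toList.2 h')
  have hvar2 : ∀ β ∈ Lψ, ∀ p ∈ β.pvars, p ∈ vs2 := by
    intro β hβ p hp
    have := hψ (hvψ β hβ hp)
    rw [hvs2, List.mem_append]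
    rcases this with h' | h'
    · exact Or.inl (Finset.mem_toList.2 h')
    · exact Or.inr (Finset.mem_toList.2 h')
  -- the derived implication α → ⋁Lψ for disjuncts of φ
  have hDer : MTThm (φ.impl ψ) := der_nil (ded (Der.ofMTDer h))
  have hαψ : ∀ α ∈ Lφ, MTThm (α.toMT.impl (dOr Lψ)) := fun α hα =>
    (((dOr_intro hα).comp b1).comp hDer).comp f2
  -- the interpolant
  set θL : List CForm := Lφ.map (fun α =>
    cT (((allTy vs1 d).filter fun t => csat t α).map fun t => tyF d (restrict σQ d t)))
    with hθL
  -- pvars of the interpolant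
  have hTWFrestr : ∀ t ∈ allTy vs1 d, TWF lQ d (restrict σQ d t) := by
    intro t ht
    have := restrict_TWF (σ := σQ) (allTy_TWF t ht)
    rwa [hfQ] at this
  have hpθ : (dOr θL).pvars ⊆ ↑Q := by
    intro p hp
    obtain ⟨γ, hγ, hpγ⟩ := pvars_dOr hp
    rw [hθL] at hγ
    obtain ⟨α, hα, rfl⟩ := List.mem_map.1 hγ
    obtain ⟨δ, hδ, hpδ⟩ := pvars_cT hpγ
    obtain ⟨t, ht, rfl⟩ := List.mem_map.1 hδ
    have := pvars_tyF (hTWFrestr t (List.mem_of_mem_filter ht)) p hpδ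
    exact Finset.mem_coe.2 (Finset.mem_toList.1 this)
  -- φ proves the interpolant
  have hφθ : MTThm (φ.impl (dOr θL)) := by
    refine f1.comp (dOr_mono2 (fun α hα => ?_))
    refine ⟨cT (((allTy vs1 d).filter fun t => csat t α).map fun t =>
      tyF d (restrict σQ d t)), ?_, ?_⟩
    · rw [hθL]; exact List.mem_map_of_mem hα
    · have hU1 : MTThm ((α.impl (cT (((allTy vs1 d).filter fun t => csat t α).map
          (tyF d)))).toMT) := by
        refine exh_elim (hdepth α (List.mem_append_left _ hα)) (hvar1 α hα) ?_
        intro t ht hcs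
        exact cT_intro (List.mem_map.2 ⟨t, List.mem_filter.2 ⟨ht, hcs⟩, rfl⟩)
      refine MTThm.comp hU1 (cT_mono2 (fun γ hγ => ?_))
      obtain ⟨t, ht, rfl⟩ := List.mem_map.1 hγ
      exact ⟨tyF d (restrict σQ d t), List.mem_map.2 ⟨t, ht, rfl⟩, restrict_der t⟩
  -- the claim: a single β works for each α
  have claim : ∀ α ∈ Lφ, ∀ t₀ ∈ (allTy vs1 d).filter (fun t => csat t α),
      ∃ β ∈ Lψ, ∀ w ∈ allTy vs2 d,
        (∃ t ∈ (allTy vs1 d).filter (fun t => csat t α),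
          csat w (tyF d (restrict σQ d t)) = true) → csat w β = true := by
    intro α hα t₀ ht₀
    by_contra hcon
    push_neg at hcon
    -- amalgamation hypotheses
    have hyp1 : ∀ p ∈ vs2, σR p = true ∨ σQ p = true := by
      intro p hp
      rcases List.mem_append.1 hp with h' | h'
      · exact Or.inr (by simp [hσQ, Finset.mem_toList.1 h'])
      · exact Or.inl (by simp [hσR, Finset.mem_toList.1 h'])
    have hyp2 : ∀ p, σQ p = true → p ∈ vs2 → p ∈ vs1 := by
      intro p hp _
      rw [hσQ] at hp
      exact List.mem_append.2 (Or.inr (Finset.mem_toList.2 (by simpa using hp)))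
    have hTWFt₀ : TWF vs1 d t₀ := allTy_TWF t₀ (List.mem_of_mem_filter ht₀)
    have hcsα : csat t₀ α = true := by simpa using (List.mem_filter.1 ht₀).2
    set v₀ := extend lR d t₀ with hv₀
    obtain ⟨hv₀imp, hv₀TWF⟩ := extend_spec (pad := lR) hTWFt₀
    set X : Set Ty := {v | v = v₀ ∨ ∃ β ∈ Lψ, ∃ t ∈ (allTy vs1 d).filter
        (fun t => csat t α), ∃ w ∈ allTy vs2 d,
        csat w (tyF d (restrict σQ d t)) = true ∧ csat w β = false ∧
        v = amalg σQ σR d t w} with hX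
    -- all members of X satisfy α
    have hXα : ∀ v ∈ X, csat v α = true := by
      intro v hv
      rcases hv with rfl | ⟨β, hβ, t, ht, w, hw, hcompat, hβf, rfl⟩
      · have hself : csat v₀ (tyF d v₀) = true := tySelf hndV hv₀TWF
        have himp : MTThm ((tyF d v₀).toMT.impl α.toMT) :=
          hv₀imp.comp ((tyDec hTWFt₀ (hdepth α (List.mem_append_left _ hα))
            (hvar1 α hα)).1 hcsα)
        exact csat_of_thm himp hself
      · have hTWFt : TWF vs1 d t := allTy_TWF t (List.mem_of_mem_filter ht)
        have hTWFw : TWF vs2 d w := allTy_TWF w hw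
        obtain ⟨hA1, hA2, hATWF⟩ := amalg_spec hyp1 hyp2 hnd2 hTWFt hTWFw hcompat
        rw [hfR] at hATWF
        have hself : csat (amalg σQ σR d t w) (tyF d (amalg σQ σR d t w)) = true :=
          tySelf hndV hATWF
        have hcst : csat t α = true := by simpa using (List.mem_filter.1 ht).2
        have himp : MTThm ((tyF d (amalg σQ σR d t w)).toMT.impl α.toMT) :=
          hA1.comp ((tyDec hTWFt (hdepth α (List.mem_append_left _ hα))
            (hvar1 α hα)).1 hcst)
        exact csat_of_thm himp hself
    have hXne : v₀ ∈ X := Or.inl rfl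
    have hXsem : tsem (dOr Lψ) X :=
      soundness (hαψ α hα) X X subset_rfl ((tsem_flat α X).2 hXα)
    rcases tsem_dOr hXsem with hXe | ⟨β, hβ, hXβ⟩
    · rw [hXe] at hXne; simp at hXne
    · -- the bad world for β is in X but fails β
      obtain ⟨w, hw, ⟨t, ht, hcompat⟩, hβf⟩ := hcon β hβ
      have hβf' : csat w β = false := by simpa using hβf
      have hvX : amalg σQ σR d t w ∈ X :=
        Or.inr ⟨β, hβ, t, ht, w, hw, hcompat, hβf', rfl⟩
      have hcv : csat (amalg σQ σR d t w) β = true :=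
        (tsem_flat β X).1 hXβ _ hvX
      -- but the amalgam proves ¬β
      have hTWFt : TWF vs1 d t := allTy_TWF t (List.mem_of_mem_filter ht)
      have hTWFw : TWF vs2 d w := allTy_TWF w hw
      obtain ⟨hA1, hA2, hATWF⟩ := amalg_spec hyp1 hyp2 hnd2 hTWFt hTWFw hcompat
      rw [hfR] at hATWF
      have hself : csat (amalg σQ σR d t w) (tyF d (amalg σQ σR d t w)) = true :=
        tySelf hndV hATWF
      have himp : MTThm ((tyF d (amalg σQ σR d t w)).toMT.impl β.neg.toMT) :=
        hA2.comp ((tyDec hTWFw (hdepth β (List.mem_append_right _ hβ))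
          (hvar2 β hβ)).2 hβf')
      have := csat_neg_of_thm himp hself
      rw [hcv] at this; cases this
  -- the interpolant proves ψ
  have hθψ : MTThm ((dOr θL).impl ψ) := by
    refine MTThm.comp ?_ b2
    refine dOr_elim (fun γ hγ => ?_)
    rw [hθL] at hγ
    obtain ⟨α, hα, rfl⟩ := List.mem_map.1 hγ
    cases hT : (allTy vs1 d).filter (fun t => csat t α) with
    | nil =>
      exact MTThm.ax (.ipc7 _)
    | cons t₀ rest =>
      have ht₀ : t₀ ∈ (allTy vs1 d).filter (fun t => csat t α) := by
        rw [hT]; exact List.mem_cons_self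
      obtain ⟨β, hβ, hβall⟩ := claim α hα t₀ ht₀
      refine MTThm.comp (cT_elim (fun u hu => ?_)) (dOr_intro hβ)
      obtain ⟨t, ht, rfl⟩ := List.mem_map.1 hu
      have ht' : t ∈ (allTy vs1 d).filter (fun t => csat t α) := by
        rw [hT]; exact ht
      refine exh_elim (vs := vs2) (mdepth_tyF d _) ?_ ?_
      · intro p hp
        have := pvars_tyF (hTWFrestr t (List.mem_of_mem_filter ht')) p hp
        exact List.mem_append.2 (Or.inl this)
      · intro w hw hcs
        refine (tyDec (allTy_TWF w hw) (hdepth β (List.mem_append_right _ hβ))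
          (hvar2 β hβ)).1 ?_
        exact hβall w hw ⟨t, ht', hcs⟩
  exact ⟨dOr θL, hpθ, MTDer.mp (MTDer.thm hφθ) MTDer.hyp,
    MTDer.mp (MTDer.thm hθψ) MTDer.hyp⟩
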